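/- arXiv:1204.1479 — 9 statements merged into one kernel-verified Lean document; each statement's English description precedes it below -/
import Mathlib

section
/- Let S and T be commuting bounded linear operators on a complex Banach space X and let p be a polynomial in two variables. Then the spectrum of p(S,T) is contained in the set {p(λ,μ) : λ ∈ σ(S), μ ∈ σ(T)}. -/
/-!
The bicommutant `B` of `{S, T}` is a closed commutative subalgebra of `L(X)` containing `S`, `T`
and `p(S,T)`. It is inverse-closed (the inverse of an operator commuting with something commutes
with it too), so spectra computed in `B` agree with those in `L(X)`. By Gelfand theory every
`z ∈ σ(p(S,T))` is `φ(p(S,T)) = p(φ S, φ T)` for a character `φ` of `B`, and `φ S ∈ σ(S)`,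
`φ T ∈ σ(T)`.
-/

open Subalgebra

namespace Subalgebra

section Centralizer

variable {R A : Type*} [CommRing R] [Ring A] [Algebra R A]

theorem isUnit_centralizer_iff {s : Set A} {a : centralizer R s} :
    IsUnit a ↔ IsUnit (a : A) := by
  refine ⟨fun ha ↦ ha.map (centralizer R s).val, fun ⟨u, hu⟩ ↦ ?_⟩
  have inv_mem : (↑u⁻¹ : A) ∈ centralizer R s := fun g hg ↦
    (Commute.units_inv_right (hu ▸ a.2 g hg : Commute g u)).eq
  exact ⟨⟨a, ⟨_, inv_mem⟩, Subtype.ext (by simp [← hu]), Subtype.ext (by simp [← hu])⟩, rfl⟩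

theorem spectrum_centralizer_eq (s : Set A) (a : centralizer R s) :
    spectrum R (a : A) = spectrum R a := by
  ext z
  rw [spectrum.mem_iff, spectrum.mem_iff, isUnit_centralizer_iff]
  rfl

end Centralizer

noncomputable abbrev normedCommRingCentralizerCentralizer {𝕜 A : Type*} [NormedField 𝕜]
    [NormedRing A] [NormedAlgebra 𝕜 A] {s : Set A} (hs : ∀ x ∈ s, ∀ y ∈ s, x * y = y * x) :
    NormedCommRing (centralizer 𝕜 (Set.centralizer s)) :=
  { (inferInstance : NormedRing (centralizer 𝕜 (Set.centralizer s))) with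
    mul_comm := fun a b ↦ Subtype.ext <|
      Set.centralizer_centralizer_comm_of_comm hs _ a.2 _ b.2 }

end Subalgebra

theorem AlgHom.map_finsuppSum_smul_pow_mul_pow {R A B : Type*} [CommSemiring R] [Semiring A]
    [Semiring B] [Algebra R A] [Algebra R B] (f : A →ₐ[R] B) (p : (ℕ × ℕ) →₀ R) (a b : A) :
    f (p.sum fun ij c => c • (a ^ ij.1 * b ^ ij.2)) =
      p.sum fun ij c => c • (f a ^ ij.1 * f b ^ ij.2) := by
  simp [map_finsuppSum]

theorem exists_algHom_centralizer_centralizer_of_mem_spectrum {A : Type*} [NormedRing A]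
    [NormedAlgebra ℂ A] [CompleteSpace A] {s : Set A} (hs : ∀ x ∈ s, ∀ y ∈ s, x * y = y * x)
    (a : centralizer ℂ (Set.centralizer s)) {z : ℂ} (hz : z ∈ spectrum ℂ (a : A)) :
    ∃ φ : centralizer ℂ (Set.centralizer s) →ₐ[ℂ] ℂ,
      φ a = z ∧ ∀ b : centralizer ℂ (Set.centralizer s), φ b ∈ spectrum ℂ (b : A) := by
  let := normedCommRingCentralizerCentralizer (𝕜 := ℂ) hs
  have : CompleteSpace (centralizer ℂ (Set.centralizer s)) :=
    (Set.isClosed_centralizer _).completeSpace_coe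
  rw [spectrum_centralizer_eq] at hz
  obtain ⟨φ, hφ⟩ := WeakDual.CharacterSpace.mem_spectrum_iff_exists.mp hz
  refine ⟨WeakDual.CharacterSpace.equivAlgHom φ, hφ, fun b ↦ ?_⟩
  rw [spectrum_centralizer_eq]
  exact AlgHom.apply_mem_spectrum _ b

/-- For commuting bounded operators `S`, `T` on a complex Banach space `X`
and a polynomial `p` in two variables (given by its finitely supported coefficient
function `(ℕ × ℕ) →₀ ℂ`), the spectrum of `p(S,T)` is contained in
`{p(λ,μ) : λ ∈ σ(S), μ ∈ σ(T)}`. -/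
theorem stmt0 {X : Type*} [NormedAddCommGroup X] [NormedSpace ℂ X] [CompleteSpace X]
    (S T : X →L[ℂ] X) (hST : S * T = T * S) (p : (ℕ × ℕ) →₀ ℂ) :
    spectrum ℂ (p.sum fun ij c => c • (S ^ ij.1 * T ^ ij.2)) ⊆
      {z : ℂ | ∃ l ∈ spectrum ℂ S, ∃ m ∈ spectrum ℂ T,
        z = p.sum fun ij c => c * l ^ ij.1 * m ^ ij.2} := by
  intro z hz
  let B := centralizer ℂ (Set.centralizer ({S, T} : Set (X →L[ℂ] X)))
  let S' : B := ⟨S, Set.subset_centralizer_centralizer (by simp)⟩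
  let T' : B := ⟨T, Set.subset_centralizer_centralizer (by simp)⟩
  have hP : B.val (p.sum fun ij c => c • (S' ^ ij.1 * T' ^ ij.2)) =
      p.sum fun ij c => c • (S ^ ij.1 * T ^ ij.2) :=
    B.val.map_finsuppSum_smul_pow_mul_pow p S' T'
  rw [← hP] at hz
  obtain ⟨φ, rfl, hφ⟩ :=
    exists_algHom_centralizer_centralizer_of_mem_spectrum (s := {S, T}) (by simp [hST]) _ hz
  refine ⟨φ S', hφ S', φ T', hφ T', ?_⟩
  simp [φ.map_finsuppSum_smul_pow_mul_pow, mul_assoc]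
end

section
/- Let T be a bounded linear operator on a complex Banach space X and let L be a closed subspace of X invariant under T. Then σ(T|L) ⊂ σ(T) ∪ ρ_b(T), where ρ_b(T) is the union of all bounded connected components of the resolvent set ρ(T). In particular, if σ(T) ⊂ ℝ, then σ(T|L) ⊂ σ(T). -/
/-!
Operators leaving `L` invariant form a closed subalgebra `B` of `X →L[ℂ] X`, and restriction to
`L` is an algebra homomorphism `B → (L →L[ℂ] L)`, so `σ(T|L) ⊆ σ_B(T)`. For a closed subalgebra,
`σ_B(T) \ σ(T)` is a union of bounded components of `ρ(T)` (a consequence of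
`∂σ_B(T) ⊆ σ(T)`). If `σ(T) ⊆ ℝ`, a vertical ray joins any point of `ρ(T)` to infinity inside
`ρ(T)`, so no component of `ρ(T)` is bounded.
-/

open Bornology Set

namespace ContinuousLinearMap

variable {𝕜 X : Type*} [NontriviallyNormedField 𝕜] [NormedAddCommGroup X] [NormedSpace 𝕜 X]

def invtSubalgebra (L : Submodule 𝕜 X) : Subalgebra 𝕜 (X →L[𝕜] X) where
  carrier := {A | ∀ x ∈ L, A x ∈ L}
  mul_mem' hA hB x hx := hA _ (hB x hx)
  add_mem' hA hB x hx := L.add_mem (hA x hx) (hB x hx)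
  algebraMap_mem' c x hx := by simpa [Algebra.algebraMap_eq_smul_one] using L.smul_mem c hx

theorem isClosed_invtSubalgebra {L : Submodule 𝕜 X} (hL : IsClosed (L : Set X)) :
    IsClosed (invtSubalgebra L : Set (X →L[𝕜] X)) := by
  have : (invtSubalgebra L : Set (X →L[𝕜] X)) = ⋂ x ∈ L, (fun A => A x) ⁻¹' L := by
    ext A; simp only [mem_iInter₂, mem_preimage]; rfl
  rw [this]
  exact isClosed_biInter fun x _ => hL.preimage (apply 𝕜 X x).continuous

def restrictAlgHom (L : Submodule 𝕜 X) : invtSubalgebra L →ₐ[𝕜] (L →L[𝕜] L) where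
  toFun A := (A : X →L[𝕜] X).restrict A.2
  map_one' := rfl
  map_mul' _ _ := rfl
  map_zero' := rfl
  map_add' _ _ := rfl
  commutes' c := by ext; simp [Algebra.algebraMap_eq_smul_one]

theorem isBounded_connectedComponentIn_of_mem_spectrum_restrict [CompleteSpace X]
    {T : X →L[𝕜] X} {L : Submodule 𝕜 X} (hL : IsClosed (L : Set X)) (hT : ∀ x ∈ L, T x ∈ L)
    {z : 𝕜} (hz : z ∈ spectrum 𝕜 (T.restrict hT)) :
    IsBounded (connectedComponentIn (resolventSet 𝕜 T) z) := by
  have := isClosed_invtSubalgebra (𝕜 := 𝕜) hL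
  simpa [spectrum, compl_compl] using Subalgebra.spectrum_isBounded_connectedComponentIn
    (invtSubalgebra L) ⟨T, hT⟩ (AlgHom.spectrum_apply_subset (restrictAlgHom L) _ hz)

end ContinuousLinearMap

theorem not_isBounded_connectedComponentIn_of_ray {E : Type*} [NormedAddCommGroup E]
    [NormedSpace ℝ E] {U : Set E} {z v : E} (hv : v ≠ 0) (hU : ∀ t : ℝ, 0 ≤ t → z + t • v ∈ U) :
    ¬ IsBounded (connectedComponentIn U z) := by
  have hray : (fun t : ℝ => z + t • v) '' Ici 0 ⊆ connectedComponentIn U z :=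
    (isPreconnected_Ici.image _ (by fun_prop)).subset_connectedComponentIn
      ⟨0, mem_Ici.2 le_rfl, by simp⟩ (by rintro _ ⟨t, ht, rfl⟩; exact hU t ht)
  intro hbdd
  obtain ⟨C, hC⟩ := (hbdd.subset hray).subset_closedBall z
  have hvpos : 0 < ‖v‖ := norm_pos_iff.mpr hv
  have hfar := hC ⟨(|C| + 1) / ‖v‖, mem_Ici.2 (by positivity), rfl⟩
  rw [Metric.mem_closedBall, dist_eq_norm, add_sub_cancel_left, norm_smul, Real.norm_of_nonneg
    (by positivity), div_mul_cancel₀ _ hvpos.ne'] at hfar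
  linarith [le_abs_self C]

theorem Complex.exists_ray_im_ne_zero (z : ℂ) :
    ∃ v : ℂ, v ≠ 0 ∧ ∀ t : ℝ, 0 < t → (z + t • v).im ≠ 0 := by
  rcases le_or_gt 0 z.im with h | h
  · refine ⟨I, I_ne_zero, fun t ht => ne_of_gt ?_⟩
    simpa using add_pos_of_nonneg_of_pos h ht
  · refine ⟨-I, neg_ne_zero.mpr I_ne_zero, fun t ht => ne_of_lt ?_⟩
    simpa using sub_neg_of_lt (h.trans ht)

theorem Complex.not_isBounded_connectedComponentIn_of_forall_im_ne_zero {U : Set ℂ}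
    (hU : ∀ w : ℂ, w.im ≠ 0 → w ∈ U) {z : ℂ} (hz : z ∈ U) :
    ¬ IsBounded (connectedComponentIn U z) := by
  obtain ⟨v, hv, him⟩ := z.exists_ray_im_ne_zero
  refine not_isBounded_connectedComponentIn_of_ray hv fun t ht => ?_
  rcases ht.eq_or_lt with rfl | ht
  · simpa using hz
  · exact hU _ (him t ht)

/-- If `L` is a closed `T`-invariant subspace of a complex Banach space and
`T'` is the restriction of `T` to `L`, then `σ(T') ⊆ σ(T) ∪ ρ_b(T)`, where `ρ_b(T)` is the
union of the bounded connected components of the resolvent set. In particular, if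
`σ(T) ⊂ ℝ` then `σ(T') ⊆ σ(T)`. -/
theorem stmt3 {X : Type*} [NormedAddCommGroup X] [NormedSpace ℂ X] [CompleteSpace X]
    (T : X →L[ℂ] X) (L : Submodule ℂ X) (hLc : IsClosed (L : Set X))
    (hLinv : ∀ x ∈ L, T x ∈ L)
    (T' : ↥L →L[ℂ] ↥L) (hT' : ∀ x : ↥L, (T' x : X) = T x) :
    spectrum ℂ T' ⊆ spectrum ℂ T ∪
      {z : ℂ | z ∈ resolventSet ℂ T ∧
        Bornology.IsBounded (connectedComponentIn (resolventSet ℂ T) z)} ∧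
    ((∀ z ∈ spectrum ℂ T, z.im = 0) → spectrum ℂ T' ⊆ spectrum ℂ T) := by
  obtain rfl : T' = T.restrict hLinv := by ext x; exact hT' x
  have hbdd (z : ℂ) (hz : z ∈ spectrum ℂ (T.restrict hLinv)) :=
    ContinuousLinearMap.isBounded_connectedComponentIn_of_mem_spectrum_restrict hLc hLinv hz
  -- `spectrum` is by definition the complement of `resolventSet`, whence the `of_not_not`s.
  refine ⟨fun z hz => ?_, fun hreal z hz => ?_⟩
  · by_cases hzT : z ∈ spectrum ℂ T
    · exact .inl hzT
    · exact .inr ⟨of_not_not hzT, hbdd z hz⟩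
  · by_contra hzT
    exact Complex.not_isBounded_connectedComponentIn_of_forall_im_ne_zero
      (fun w hw => of_not_not fun hmem => hw (hreal w hmem)) (of_not_not hzT) (hbdd z hz)
end

section
/- Let S and T be bounded linear operators on complex Banach spaces X and Y respectively with σ(S) ∩ σ(T) = ∅. Then for every Z ∈ L(Y, X) the Sylvester equation S X₀ − X₀ T = Z has a unique solution X₀ ∈ L(Y, X). -/
/-!
The Sylvester operator `W ↦ S W - W T` on `L(Y, X)` is `L - R`, with `L` postcomposition by `S`
and `R` precomposition by `T`. These commute, and `σ(L) ⊆ σ(S)`, `σ(R) ⊆ σ(T)` because `L` and `R`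
are images of `S` and `T` under algebra homomorphisms (from the opposite algebra in the case of
`R`). For commuting `a, b` in a complex Banach algebra, `σ(a - b) ⊆ σ(a) - σ(b)`: the double
centralizer of `{a, b}` is a closed, inverse-closed commutative subalgebra, so spectra computed
there are the same, and by Gelfand theory each point of `σ(a - b)` is `φ a - φ b` for a character
`φ`. Hence `0 ∉ σ(L - R)`, i.e. `L - R` is invertible.
-/

open ContinuousLinearMap MulOpposite

namespace Subalgebra

variable {R A : Type*} [Ring A] {s : Set A}

theorem isUnit_coe_centralizer_iff [CommSemiring R] [Algebra R A] {a : centralizer R s} :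
    IsUnit (a : A) ↔ IsUnit a := by
  obtain ⟨a, ha⟩ := a
  refine ⟨?_, fun h => h.map (centralizer R s).val⟩
  rintro ⟨u, rfl⟩
  have hinv : (↑u⁻¹ : A) ∈ centralizer R s := fun g hg => (Commute.units_inv_right (ha g hg)).eq
  exact ⟨⟨⟨u, ha⟩, ⟨_, hinv⟩, Subtype.ext u.mul_inv, Subtype.ext u.inv_mul⟩, rfl⟩

theorem spectrum_coe_centralizer [CommRing R] [Algebra R A] (a : centralizer R s) :
    spectrum R (a : A) = spectrum R a := by
  ext z
  simp only [spectrum.mem_iff, ← isUnit_coe_centralizer_iff]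
  rfl

end Subalgebra

theorem spectrum_op {R A : Type*} [CommSemiring R] [Ring A] [Algebra R A] (a : A) :
    spectrum R (op a) = spectrum R a := by
  ext z
  rw [spectrum.mem_iff, spectrum.mem_iff, ← isUnit_op (m := algebraMap R A z - a)]
  rfl

open scoped Pointwise in
theorem spectrum_sub_subset_of_commute {A : Type*} [NormedRing A] [NormedAlgebra ℂ A]
    [CompleteSpace A] {a b : A} (hab : Commute a b) :
    spectrum ℂ (a - b) ⊆ spectrum ℂ a - spectrum ℂ b := by
  let C := Subalgebra.centralizer ℂ ({a, b} : Set A).centralizer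
  let _ : NormedCommRing C :=
    { mul_comm := fun x y => Subtype.ext <| Set.centralizer_centralizer_comm_of_comm
        (by simp [hab.eq]) _ x.2 _ y.2 }
  let _ : NormedAlgebra ℂ C := C.toNormedAlgebra
  have : CompleteSpace C := (Set.isClosed_centralizer _).completeSpace_coe
  let a' : C := ⟨a, Set.subset_centralizer_centralizer (by simp)⟩
  let b' : C := ⟨b, Set.subset_centralizer_centralizer (by simp)⟩
  intro z hz
  rw [show a - b = ((a' - b' : C) : A) from rfl, Subalgebra.spectrum_coe_centralizer,
    WeakDual.CharacterSpace.mem_spectrum_iff_exists] at hz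
  obtain ⟨φ, rfl⟩ := hz
  refine ⟨φ a', ?_, φ b', ?_, (map_sub φ a' b').symm⟩
  · exact Subalgebra.spectrum_coe_centralizer a' ▸ AlgHom.apply_mem_spectrum φ a'
  · exact Subalgebra.spectrum_coe_centralizer b' ▸ AlgHom.apply_mem_spectrum φ b'

theorem isUnit_sub_of_commute_of_disjoint_spectrum {A : Type*} [NormedRing A]
    [NormedAlgebra ℂ A] [CompleteSpace A] {a b : A} (hab : Commute a b)
    (h : Disjoint (spectrum ℂ a) (spectrum ℂ b)) : IsUnit (a - b) := by
  rw [← spectrum.zero_notMem_iff ℂ]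
  intro h0
  obtain ⟨x, hx, y, hy, hxy⟩ := spectrum_sub_subset_of_commute hab h0
  exact h.ne_of_mem hx hy (sub_eq_zero.mp hxy)

namespace ContinuousLinearMap

variable (𝕜 E F : Type*) [NontriviallyNormedField 𝕜] [NormedAddCommGroup E] [NormedSpace 𝕜 E]
  [NormedAddCommGroup F] [NormedSpace 𝕜 F]

noncomputable def postcompAlgHom : (F →L[𝕜] F) →ₐ[𝕜] (E →L[𝕜] F) →L[𝕜] E →L[𝕜] F :=
  AlgHom.ofLinearMap (compL 𝕜 E F F).toLinearMap rfl fun _ _ => rfl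

noncomputable def precompAlgHom : (E →L[𝕜] E)ᵐᵒᵖ →ₐ[𝕜] (E →L[𝕜] F) →L[𝕜] E →L[𝕜] F :=
  AlgHom.ofLinearMap ((compL 𝕜 E E F).flip.toLinearMap ∘ₗ (opLinearEquiv 𝕜).symm.toLinearMap)
    rfl fun _ _ => rfl

variable {𝕜 E F}

theorem commute_postcompAlgHom_precompAlgHom (S : F →L[𝕜] F) (T : (E →L[𝕜] E)ᵐᵒᵖ) :
    Commute (postcompAlgHom 𝕜 E F S) (precompAlgHom 𝕜 E F T) :=
  rfl

theorem isUnit_postcompAlgHom_sub_precompAlgHom [NormedSpace ℂ E] [NormedSpace ℂ F]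
    [CompleteSpace F]
    {S : F →L[ℂ] F} {T : E →L[ℂ] E} (h : Disjoint (spectrum ℂ S) (spectrum ℂ T)) :
    IsUnit (postcompAlgHom ℂ E F S - precompAlgHom ℂ E F (op T)) :=
  isUnit_sub_of_commute_of_disjoint_spectrum (a := postcompAlgHom ℂ E F S)
    (commute_postcompAlgHom_precompAlgHom S (op T)) <|
    h.mono (AlgHom.spectrum_apply_subset _ S)
      ((AlgHom.spectrum_apply_subset _ (op T)).trans (spectrum_op T).subset)

end ContinuousLinearMap

theorem stmt5_general {X Y : Type*} [NormedAddCommGroup X] [NormedSpace ℂ X] [CompleteSpace X]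
    [NormedAddCommGroup Y] [NormedSpace ℂ Y]
    (S : X →L[ℂ] X) (T : Y →L[ℂ] Y) (hdisj : spectrum ℂ S ∩ spectrum ℂ T = ∅)
    (Z : Y →L[ℂ] X) : ∃! X₀ : Y →L[ℂ] X, S.comp X₀ - X₀.comp T = Z := by
  have hunit := isUnit_postcompAlgHom_sub_precompAlgHom (Set.disjoint_iff_inter_eq_empty.mpr hdisj)
  exact (isUnit_iff_bijective.mp hunit).existsUnique Z

/-- Rosenblum's corollary: if `σ(S) ∩ σ(T) = ∅` then for every bounded
`Z : Y → X` the Sylvester equation `S X₀ − X₀ T = Z` has a unique bounded solution. -/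
theorem stmt5 {X Y : Type*} [NormedAddCommGroup X] [NormedSpace ℂ X] [CompleteSpace X]
    [NormedAddCommGroup Y] [NormedSpace ℂ Y] [CompleteSpace Y]
    (S : X →L[ℂ] X) (T : Y →L[ℂ] Y) (hdisj : spectrum ℂ S ∩ spectrum ℂ T = ∅)
    (Z : Y →L[ℂ] X) : ∃! X₀ : Y →L[ℂ] X, S.comp X₀ - X₀.comp T = Z :=
  stmt5_general S T hdisj Z
end

section
/- Let T ≠ 0 be a bounded linear operator on a complex Banach space with real spectrum such that there is M > 0 with ‖(T − λ)^{−1}‖ ≤ M/|Im λ|^n for all λ with 0 < |Im λ| < ‖T‖. Then for all integers k ≥ n, ‖T^k‖ ≤ 2^k ‖T‖^{k−n} (M + ‖T‖^{n−1}) r(T), where r(T) is the spectral radius of T. -/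
/-!
Substitute `z = λ⁻¹`: then `Ring.inverse (1 - z • a) = -z⁻¹ • (a - λ)⁻¹` is holomorphic on the
disc `‖z‖ < 1 / r(a)` with Taylor coefficients `aʲ`. For `r(a) < s < ‖a‖` integrate
`z⁻¹ (s² z - z⁻¹)ⁿ (1 - z a)⁻¹` over the circle `‖z‖ = s⁻¹`. On that circle `s² z = conj λ`, so the
weight `(s² z - z⁻¹)ⁿ = (-2i Im λ)ⁿ` cancels the growth `M / |Im λ|ⁿ` of the resolvent and the
integrand is bounded by `2ⁿ s² M`. Expanding the weight binomially and reading off Cauchy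
coefficients, the integral is `2πi` times `(-1)ⁿ aⁿ` plus terms `± C(n, i) s²ⁱ aⁿ⁻²ⁱ` with `i ≥ 1`,
each of norm at most `C(n, i) s ‖a‖ⁿ⁻¹`. Hence `‖aⁿ‖ ≤ 2ⁿ s (M + ‖a‖ⁿ⁻¹)`; let `s ↓ r(a)` and
pass to `k ≥ n` by submultiplicativity.
-/

open Complex Metric Finset ComplexConjugate
open scoped Real NNReal ENNReal

theorem Ring.inverse_smul {𝕜 A : Type*} [Field 𝕜] [Ring A] [Algebra 𝕜 A] (c : 𝕜) (x : A) :
    Ring.inverse (c • x) = c⁻¹ • Ring.inverse x := by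
  rcases eq_or_ne c 0 with rfl | hc
  · simp
  have hunit : Ring.inverse (algebraMap 𝕜 A c) = algebraMap 𝕜 A c⁻¹ :=
    Ring.inverse_unit ((Units.mk0 c hc).map (algebraMap 𝕜 A : 𝕜 →* A))
  rw [Algebra.smul_def, Ring.mul_inverse_rev' (Algebra.commutes c x), hunit, ← Algebra.commutes,
    ← Algebra.smul_def]

theorem Ring.inverse_one_sub_smul {𝕜 A : Type*} [Field 𝕜] [Ring A] [Algebra 𝕜 A] (a : A)
    {z : 𝕜} (hz : z ≠ 0) : Ring.inverse (1 - z • a) = -z⁻¹ • Ring.inverse (a - z⁻¹ • 1) := by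
  have : a - z⁻¹ • 1 = -z⁻¹ • (1 - z • a) := by
    rw [smul_sub, smul_smul, neg_mul, inv_mul_cancel₀ hz]
    module
  rw [this, Ring.inverse_smul, smul_smul, inv_neg, neg_mul_neg, inv_inv, inv_mul_cancel₀ hz,
    one_smul]

theorem conj_inv_eq_sq_mul_of_norm_eq_inv {z : ℂ} {s : ℝ} (hs : 0 < s) (hz : ‖z‖ = s⁻¹) :
    conj z⁻¹ = s ^ 2 * z := by
  rw [map_inv₀, inv_eq_iff_eq_inv]
  refine eq_inv_of_mul_eq_one_left ?_
  rw [mul_left_comm, conj_mul', hz, ← mul_pow, ← ofReal_mul, mul_inv_cancel₀ hs.ne', ofReal_one,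
    one_pow]

theorem norm_sq_mul_sub_inv_of_norm_eq_inv {z : ℂ} {s : ℝ} (hs : 0 < s) (hz : ‖z‖ = s⁻¹) :
    ‖s ^ 2 * z - z⁻¹‖ = 2 * |(z⁻¹).im| := by
  rw [← conj_inv_eq_sq_mul_of_norm_eq_inv hs hz, ← neg_sub, norm_neg, sub_conj, norm_mul, norm_I,
    mul_one, norm_real, Real.norm_eq_abs, abs_mul, abs_two]

theorem inv_mul_mul_sub_inv_pow_eq_sum (c : ℂ) {z : ℂ} (hz : z ≠ 0) (n : ℕ) :
    z⁻¹ * (c * z - z⁻¹) ^ n =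
      ∑ i ∈ range (n + 1), ((-1) ^ (n - i) * c ^ i * n.choose i) * z ^ (2 * (i : ℤ) - n - 1) := by
  rw [sub_eq_add_neg, add_pow, mul_sum]
  refine sum_congr rfl fun i hi => ?_
  have hin : i ≤ n := Nat.lt_succ_iff.mp (mem_range.mp hi)
  rw [show 2 * (i : ℤ) - n - 1 = i - (n - i : ℕ) - 1 by push_cast [Nat.cast_sub hin]; ring,
    zpow_sub₀ hz, zpow_sub₀ hz, zpow_natCast, zpow_natCast, zpow_one, neg_pow]
  ring

theorem pow_mul_pow_sub_le {s t : ℝ} (hs : 0 ≤ s) (hst : s ≤ t) {p m : ℕ} (hp : 1 ≤ p)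
    (hpm : p ≤ m) : s ^ p * t ^ (m - p) ≤ s * t ^ (m - 1) :=
  calc s ^ p * t ^ (m - p) = s * (s ^ (p - 1) * t ^ (m - p)) := by
        rw [← mul_assoc, ← pow_succ', Nat.sub_add_cancel hp]
    _ ≤ s * (t ^ (p - 1) * t ^ (m - p)) := by gcongr; exact pow_nonneg (hs.trans hst) _
    _ = s * t ^ (m - 1) := by rw [← pow_add]; congr 2; omega

section ResolventGrowth

variable {A : Type*} [NormedRing A] [NormedAlgebra ℂ A] {a : A} {n : ℕ} {M s : ℝ}

def ResolventGrowthBound (a : A) (n : ℕ) (M : ℝ) : Prop :=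
  ∀ z : ℂ, 0 < |z.im| → |z.im| < ‖a‖ → ‖Ring.inverse (a - z • (1 : A))‖ ≤ M / |z.im| ^ n

/-- The `i`-th term of the polynomial part of the Laurent polynomial `(s² λ⁻¹ - λ)ⁿ`, evaluated
at `a`. -/
noncomputable def polynomialPartTerm (a : A) (s : ℝ) (n i : ℕ) : A :=
  ((-1) ^ (n - i) * (s : ℂ) ^ (2 * i) * n.choose i) • if 2 * i ≤ n then a ^ (n - 2 * i) else 0

theorem polynomialPartTerm_zero : polynomialPartTerm a s n 0 = (-1 : ℂ) ^ n • a ^ n := by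
  simp [polynomialPartTerm]

theorem norm_polynomialPartTerm_le [NormOneClass A] (hs : 0 ≤ s) (hsa : s ≤ ‖a‖) {i : ℕ}
    (hi : i ≠ 0) : ‖polynomialPartTerm a s n i‖ ≤ n.choose i * (s * ‖a‖ ^ (n - 1)) := by
  rw [polynomialPartTerm, norm_smul]
  simp only [norm_mul, norm_pow, norm_neg, norm_one, one_pow, one_mul, norm_real,
    Real.norm_eq_abs, abs_of_nonneg hs, Complex.norm_natCast]
  split_ifs with h
  · calc s ^ (2 * i) * n.choose i * ‖a ^ (n - 2 * i)‖
        ≤ n.choose i * (s ^ (2 * i) * ‖a‖ ^ (n - 2 * i)) := by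
          rw [mul_comm (s ^ _), mul_assoc]; gcongr; exact norm_pow_le _ _
      _ ≤ n.choose i * (s * ‖a‖ ^ (n - 1)) :=
          mul_le_mul_of_nonneg_left (pow_mul_pow_sub_le hs hsa (by omega) h) (by positivity)
  · rw [norm_zero, mul_zero]
    positivity

theorem norm_inv_mul_sq_mul_sub_inv_pow_smul_le (hn : n ≠ 0) (hM : 0 ≤ M)
    (hres : ResolventGrowthBound a n M) (hs : 0 < s) (hsa : s < ‖a‖) {z : ℂ} (hz : ‖z‖ = s⁻¹) :
    ‖(z⁻¹ * (s ^ 2 * z - z⁻¹) ^ n) • Ring.inverse (1 - z • a)‖ ≤ 2 ^ n * s ^ 2 * M := by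
  have hz0 : z ≠ 0 := norm_ne_zero_iff.mp (hz ▸ (inv_pos.mpr hs).ne')
  have hzinv : ‖z⁻¹‖ = s := by rw [norm_inv, hz, inv_inv]
  rw [Ring.inverse_one_sub_smul a hz0, norm_smul, norm_smul, norm_mul, norm_pow, norm_neg, hzinv,
    norm_sq_mul_sub_inv_of_norm_eq_inv hs hz, mul_pow]
  rcases (abs_nonneg (z⁻¹).im).eq_or_lt with him | him
  · rw [← him, zero_pow hn, mul_zero, mul_zero, zero_mul]
    positivity
  · have hR := hres z⁻¹ him ((abs_im_le_norm _).trans_lt (hzinv ▸ hsa))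
    calc s * (2 ^ n * |(z⁻¹).im| ^ n) * (s * ‖Ring.inverse (a - z⁻¹ • 1)‖)
        = 2 ^ n * s ^ 2 * (|(z⁻¹).im| ^ n * ‖Ring.inverse (a - z⁻¹ • 1)‖) := by ring
      _ ≤ 2 ^ n * s ^ 2 * (|(z⁻¹).im| ^ n * (M / |(z⁻¹).im| ^ n)) := by gcongr
      _ = 2 ^ n * s ^ 2 * M := by rw [mul_div_cancel₀ _ (pow_pos him n).ne']

variable [CompleteSpace A] {ρ : ℝ≥0}

theorem circleIntegral_inv_pow_smul_inverse_one_sub_smul (hρ : 0 < ρ)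
    (hρa : (ρ : ℝ≥0∞) < (spectralRadius ℂ a)⁻¹) (j : ℕ) :
    ∮ z in C(0, ρ), (z ^ (j + 1))⁻¹ • Ring.inverse (1 - z • a) = (2 * π * I) • a ^ j := by
  have hcoeff := congrArg (fun p => p j fun _ => 1)
    (((spectrum.differentiableOn_inverse_one_sub_smul hρa).hasFPowerSeriesOnBall
      hρ).hasFPowerSeriesAt.eq_formalMultilinearSeries
      (spectrum.hasFPowerSeriesOnBall_inverse_one_sub_smul ℂ a).hasFPowerSeriesAt)
  simp only [cauchyPowerSeries_apply, ContinuousMultilinearMap.mkPiRing_apply, sub_zero,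
    prod_const_one, one_smul, one_div, smul_smul, inv_pow] at hcoeff
  simp only [pow_succ, mul_inv]
  rw [← hcoeff, smul_inv_smul₀ two_pi_I_ne_zero]

theorem circleIntegral_pow_smul_inverse_one_sub_smul
    (hρa : (ρ : ℝ≥0∞) < (spectralRadius ℂ a)⁻¹) (k : ℕ) :
    ∮ z in C(0, ρ), z ^ k • Ring.inverse (1 - z • a) = 0 :=
  (((differentiableOn_pow k).smul (spectrum.differentiableOn_inverse_one_sub_smul hρa)).mono
    closure_ball_subset_closedBall).diffContOnCl.circleIntegral_eq_zero ρ.coe_nonneg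

theorem circleIntegral_zpow_smul_inverse_one_sub_smul (hρ : 0 < ρ)
    (hρa : (ρ : ℝ≥0∞) < (spectralRadius ℂ a)⁻¹) (k : ℤ) :
    ∮ z in C(0, ρ), z ^ k • Ring.inverse (1 - z • a) =
      if k < 0 then (2 * π * I) • a ^ (-k - 1).toNat else 0 := by
  cases k with
  | ofNat k =>
    rw [Int.ofNat_eq_natCast, if_neg (not_lt.mpr k.cast_nonneg)]
    simpa only [zpow_natCast] using circleIntegral_pow_smul_inverse_one_sub_smul hρa k
  | negSucc j =>
    simpa [zpow_negSucc, Int.negSucc_lt_zero] using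
      circleIntegral_inv_pow_smul_inverse_one_sub_smul hρ hρa j

theorem continuousOn_zpow_smul_inverse_one_sub_smul (hρ : 0 < ρ)
    (hρa : (ρ : ℝ≥0∞) < (spectralRadius ℂ a)⁻¹) (k : ℤ) :
    ContinuousOn (fun z : ℂ => z ^ k • Ring.inverse (1 - z • a)) (sphere 0 ρ) :=
  ((continuousOn_zpow₀ k).mono fun (z : ℂ) hz =>
    (ne_zero_of_mem_sphere (NNReal.coe_ne_zero.mpr hρ.ne') ⟨z, hz⟩ : z ≠ 0)).smul
    ((spectrum.differentiableOn_inverse_one_sub_smul hρa).continuousOn.mono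
      sphere_subset_closedBall)

theorem circleIntegral_inv_mul_sq_mul_sub_inv_pow_smul (hs : 0 < s)
    (hrs : spectralRadius ℂ a < ENNReal.ofReal s) (n : ℕ) :
    ∮ z in C(0, s⁻¹), (z⁻¹ * (s ^ 2 * z - z⁻¹) ^ n) • Ring.inverse (1 - z • a) =
      (2 * π * I) • ∑ i ∈ range (n + 1), polynomialPartTerm a s n i := by
  obtain ⟨ρ, hρs⟩ : ∃ ρ : ℝ≥0, (ρ : ℝ) = s⁻¹ := ⟨s⁻¹.toNNReal, Real.coe_toNNReal _ (by positivity)⟩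
  have hρ : 0 < ρ := by rw [← NNReal.coe_pos, hρs]; positivity
  have hρa : (ρ : ℝ≥0∞) < (spectralRadius ℂ a)⁻¹ := by
    rw [← ENNReal.ofReal_coe_nnreal, hρs, ENNReal.ofReal_inv_of_pos hs]
    exact ENNReal.inv_lt_inv.mpr hrs
  have hexpand : Set.EqOn
      (fun z : ℂ => (z⁻¹ * (s ^ 2 * z - z⁻¹) ^ n) • Ring.inverse (1 - z • a))
      (fun z => ∑ i ∈ range (n + 1), ((-1) ^ (n - i) * (s : ℂ) ^ (2 * i) * n.choose i) •
        (z ^ (2 * (i : ℤ) - n - 1) • Ring.inverse (1 - z • a))) (sphere 0 ρ) := fun z hz => by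
    dsimp only
    rw [inv_mul_mul_sub_inv_pow_eq_sum _
      (ne_zero_of_mem_sphere (NNReal.coe_ne_zero.mpr hρ.ne') ⟨z, hz⟩), sum_smul]
    exact sum_congr rfl fun i _ => by rw [mul_smul, ← pow_mul]
  rw [← hρs]
  refine (circleIntegral.integral_congr ρ.coe_nonneg hexpand).trans ?_
  rw [circleIntegral.integral_fun_sum fun i _ => ?_, smul_sum]
  swap
  · exact (continuousOn_const.smul (continuousOn_zpow_smul_inverse_one_sub_smul hρ hρa _)
      ).circleIntegrable ρ.coe_nonneg
  refine sum_congr rfl fun i _ => ?_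
  rw [circleIntegral.integral_smul, circleIntegral_zpow_smul_inverse_one_sub_smul hρ hρa,
    polynomialPartTerm, smul_comm,
    if_congr (by omega : 2 * (i : ℤ) - n - 1 < 0 ↔ 2 * i ≤ n) rfl rfl]
  congr 1
  split_ifs
  · congr 2; omega
  · rw [smul_zero]

variable [NormOneClass A]

theorem norm_pow_le_two_pow_mul_of_spectralRadius_lt (hn : n ≠ 0) (hM : 0 ≤ M)
    (hres : ResolventGrowthBound a n M) (hrs : spectralRadius ℂ a < ENNReal.ofReal s)
    (hsa : s < ‖a‖) : ‖a ^ n‖ ≤ 2 ^ n * s * (M + ‖a‖ ^ (n - 1)) := by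
  have hs : 0 < s := ENNReal.ofReal_pos.mp (bot_le.trans_lt hrs)
  have hsum : ‖∑ i ∈ range (n + 1), polynomialPartTerm a s n i‖ ≤ 2 ^ n * s * M := by
    have hint := circleIntegral.norm_integral_le_of_norm_le_const (inv_nonneg.mpr hs.le)
      fun z hz => norm_inv_mul_sq_mul_sub_inv_pow_smul_le hn hM hres hs hsa
        (mem_sphere_zero_iff_norm.mp hz)
    have h2π : ‖(2 * π * I : ℂ)‖ = 2 * π := by simp [Real.pi_pos.le]
    rw [circleIntegral_inv_mul_sq_mul_sub_inv_pow_smul hs hrs, norm_smul, h2π] at hint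
    exact le_of_mul_le_mul_left (hint.trans_eq (by field_simp)) Real.two_pi_pos
  have hchoose : ∑ i ∈ range n, (n.choose (i + 1) : ℝ) ≤ 2 ^ n := by
    have : ∑ i ∈ range n, n.choose (i + 1) ≤ 2 ^ n := by
      rw [← Nat.sum_range_choose n, sum_range_succ']
      exact Nat.le_add_right _ _
    exact_mod_cast this
  calc ‖a ^ n‖ = ‖∑ i ∈ range (n + 1), polynomialPartTerm a s n i -
        ∑ i ∈ range n, polynomialPartTerm a s n (i + 1)‖ := by
        rw [sum_range_succ', add_sub_cancel_left, polynomialPartTerm_zero, norm_smul]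
        simp
    _ ≤ ‖∑ i ∈ range (n + 1), polynomialPartTerm a s n i‖ +
        ∑ i ∈ range n, ‖polynomialPartTerm a s n (i + 1)‖ :=
        (norm_sub_le _ _).trans (add_le_add le_rfl (norm_sum_le _ _))
    _ ≤ 2 ^ n * s * M + ∑ i ∈ range n, n.choose (i + 1) * (s * ‖a‖ ^ (n - 1)) :=
        add_le_add hsum (sum_le_sum fun i _ =>
          norm_polynomialPartTerm_le hs.le hsa.le i.succ_ne_zero)
    _ ≤ 2 ^ n * s * M + 2 ^ n * (s * ‖a‖ ^ (n - 1)) := by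
        rw [← sum_mul]
        gcongr
    _ = 2 ^ n * s * (M + ‖a‖ ^ (n - 1)) := by ring

theorem norm_pow_le_two_pow_mul_spectralRadius (hn : n ≠ 0) (hM : 0 ≤ M)
    (hres : ResolventGrowthBound a n M) :
    ‖a ^ n‖ ≤ 2 ^ n * (spectralRadius ℂ a).toReal * (M + ‖a‖ ^ (n - 1)) := by
  have hr_le : spectralRadius ℂ a ≤ ‖a‖₊ := spectrum.spectralRadius_le_nnnorm a
  have hr_ne_top : spectralRadius ℂ a ≠ ⊤ := ne_top_of_le_ne_top ENNReal.coe_ne_top hr_le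
  have hra : (spectralRadius ℂ a).toReal ≤ ‖a‖ := ENNReal.toReal_mono ENNReal.coe_ne_top hr_le
  rcases hra.lt_or_eq with hlt | heq
  · refine ge_of_tendsto (((by fun_prop : Continuous fun s : ℝ => 2 ^ n * s * (M + ‖a‖ ^ (n - 1)))
      |>.tendsto _).mono_left (nhdsWithin_le_nhds (s := Set.Ioi (spectralRadius ℂ a).toReal))) ?_
    filter_upwards [Ioo_mem_nhdsGT hlt] with s hs
    exact norm_pow_le_two_pow_mul_of_spectralRadius_lt hn hM hres
      ((ENNReal.lt_ofReal_iff_toReal_lt hr_ne_top).mpr hs.1) hs.2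
  · calc ‖a ^ n‖ ≤ ‖a‖ ^ n := norm_pow_le a n
      _ = 1 * (spectralRadius ℂ a).toReal * ‖a‖ ^ (n - 1) := by
        rw [heq, one_mul, ← pow_succ', Nat.sub_add_cancel (Nat.one_le_iff_ne_zero.mpr hn)]
      _ ≤ 2 ^ n * (spectralRadius ℂ a).toReal * (M + ‖a‖ ^ (n - 1)) := by
        gcongr
        · exact one_le_pow₀ one_le_two
        · exact le_add_of_nonneg_left hM

end ResolventGrowth

theorem stmt7_general {X : Type*} [NormedAddCommGroup X] [NormedSpace ℂ X] [CompleteSpace X]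
    (T : X →L[ℂ] X) (hT0 : T ≠ 0) (n : ℕ) (hn : 1 ≤ n)
    (M : ℝ) (hM : 0 < M)
    (hres : ∀ z : ℂ, 0 < |z.im| → |z.im| < ‖T‖ →
      ‖Ring.inverse (T - z • (1 : X →L[ℂ] X))‖ ≤ M / |z.im| ^ n) :
    ∀ k : ℕ, n ≤ k →
      ‖T ^ k‖ ≤ 2 ^ k * ‖T‖ ^ (k - n) * (M + ‖T‖ ^ (n - 1)) * (spectralRadius ℂ T).toReal := by
  intro k hk
  obtain ⟨x, hx⟩ : ∃ x, T x ≠ 0 := by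
    by_contra! h
    exact hT0 (ContinuousLinearMap.ext h)
  have : Nontrivial X := nontrivial_of_ne x 0 fun h => hx (by rw [h, map_zero])
  have hTn := norm_pow_le_two_pow_mul_spectralRadius (Nat.one_le_iff_ne_zero.mp hn) hM.le hres
  calc ‖T ^ k‖ = ‖T ^ (k - n) * T ^ n‖ := by rw [← pow_add, Nat.sub_add_cancel hk]
    _ ≤ ‖T‖ ^ (k - n) * ‖T ^ n‖ := (norm_mul_le _ _).trans (by gcongr; exact norm_pow_le _ _)
    _ ≤ ‖T‖ ^ (k - n) * (2 ^ n * (spectralRadius ℂ T).toReal * (M + ‖T‖ ^ (n - 1))) := by gcongr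
    _ = 2 ^ n * ‖T‖ ^ (k - n) * (M + ‖T‖ ^ (n - 1)) * (spectralRadius ℂ T).toReal := by ring
    _ ≤ 2 ^ k * ‖T‖ ^ (k - n) * (M + ‖T‖ ^ (n - 1)) * (spectralRadius ℂ T).toReal := by
      gcongr
      exact one_le_two

/-- If `T ≠ 0` has real spectrum and its resolvent satisfies
`‖(T − λ)⁻¹‖ ≤ M/|Im λ|ⁿ` for `0 < |Im λ| < ‖T‖`, then for every `k ≥ n`,
`‖Tᵏ‖ ≤ 2ᵏ ‖T‖^{k−n} (M + ‖T‖^{n−1}) r(T)`. -/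
theorem stmt7 {X : Type*} [NormedAddCommGroup X] [NormedSpace ℂ X] [CompleteSpace X]
    (T : X →L[ℂ] X) (hT0 : T ≠ 0) (n : ℕ) (hn : 1 ≤ n)
    (hre : ∀ z ∈ spectrum ℂ T, z.im = 0) (M : ℝ) (hM : 0 < M)
    (hres : ∀ z : ℂ, 0 < |z.im| → |z.im| < ‖T‖ →
      ‖Ring.inverse (T - z • (1 : X →L[ℂ] X))‖ ≤ M / |z.im| ^ n) :
    ∀ k : ℕ, n ≤ k →
      ‖T ^ k‖ ≤ 2 ^ k * ‖T‖ ^ (k - n) * (M + ‖T‖ ^ (n - 1)) * (spectralRadius ℂ T).toReal :=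
  stmt7_general T hT0 n hn M hM hres
end

section
/- Let T be a nonzero bounded operator on a complex Banach space with real spectrum whose resolvent growth is of finite order n. Then there exists C > 0 such that for each integer k ≥ n, each λ ∈ σ(T), and each compact real interval Δ with λ ∈ Δ and length ℓ(Δ) ≤ ‖T‖, the restriction T_Δ of T to the maximal spectral subspace L_Δ corresponding to Δ satisfies ‖(T_Δ − λ)^k‖ ≤ 4^k ‖T‖^k · C · ℓ(Δ). -/
/-!
Since `σ(T_Δ) ⊆ Δ` is real, the resolvent of `T_Δ` at a non-real `z` is the restriction of that of
`T` (for `y ∈ L_Δ`, `R(z, T_Δ) y` already solves `(z - T) x = y`), so it inherits the growth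
`‖R(z)‖ ≤ M' / |Im z| ^ n`, which compactness extends from the strip `|Im z| < c` to any bounded
region. Take `ε ≥ ℓ(Δ)`: the spectrum of `S = T_Δ - λ` lies in the disc of radius `ε`, and Cauchy's
estimate for the Taylor coefficients of `(1 - z S)⁻¹` gives
`‖S ^ k‖ ≤ (2ε) ^ (k + 1) · sup_{|u| = 2ε} ‖R(λ + u, T_Δ)‖`. On that circle, points far from the
real axis are controlled by the growth bound directly; points close to it lie well inside a disc
centred on the real axis that misses `Δ`, and a Levinson-type maximum principle argument bounds the
resolvent there by `M' (4 / ε) ^ n`. Hence `‖S ^ k‖ ≲ ε ^ (k + 1 - n)`, which is `O(ε)` for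
`k ≥ n`, and letting `ε ↓ ℓ(Δ)` gives the claim, degenerate intervals included.
-/

open Metric Set Filter ComplexConjugate spectrum

lemma norm_sq_sub_sq_of_mem_sphere {x₀ r : ℝ} {z : ℂ} (hz : z ∈ sphere (x₀ : ℂ) r) :
    ‖(r : ℂ) ^ 2 - (z - x₀) ^ 2‖ = 2 * r * |z.im| := by
  set w := z - x₀
  have hw : ‖w‖ = r := mem_sphere_iff_norm.1 hz
  have hr : (r : ℂ) ^ 2 = w * conj w := by
    rw [Complex.mul_conj, Complex.normSq_eq_norm_sq, hw]; push_cast; ring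
  have : (r : ℂ) ^ 2 - w ^ 2 = -(w * (w - conj w)) := by rw [hr]; ring
  rw [this, norm_neg, norm_mul, Complex.sub_conj, hw]
  simp only [norm_mul, Complex.norm_ofNat, Complex.norm_real, Real.norm_eq_abs, Complex.norm_I,
    mul_one, w, Complex.sub_im, Complex.ofReal_im, sub_zero]
  ring

lemma le_norm_sq_sub_sq_of_mem_closedBall {x₀ r : ℝ} {w : ℂ} (hr : 0 ≤ r)
    (hw : w ∈ closedBall (x₀ : ℂ) (r / 2)) :
    3 / 4 * r ^ 2 ≤ ‖(r : ℂ) ^ 2 - (w - x₀) ^ 2‖ := by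
  have hw' : ‖(w - x₀) ^ 2‖ ≤ (r / 2) ^ 2 := by
    rw [norm_pow]; exact pow_le_pow_left₀ (norm_nonneg _) (mem_closedBall_iff_norm.1 hw) 2
  calc 3 / 4 * r ^ 2 ≤ ‖(r : ℂ) ^ 2‖ - ‖(w - x₀) ^ 2‖ := by
        rw [norm_pow, Complex.norm_real, Real.norm_eq_abs, abs_of_nonneg hr]; linarith
    _ ≤ _ := norm_sub_norm_le _ _

theorem norm_le_of_forall_mem_sphere_norm_le_div_abs_im_pow {F : Type*} [NormedAddCommGroup F]
    [NormedSpace ℂ F] {f : ℂ → F} {x₀ r M : ℝ} {n : ℕ} (hn : n ≠ 0) (hr : 0 < r) (hM : 0 ≤ M)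
    (hf : DifferentiableOn ℂ f (closedBall (x₀ : ℂ) r))
    (hb : ∀ z ∈ sphere (x₀ : ℂ) r, z.im ≠ 0 → ‖f z‖ ≤ M / |z.im| ^ n)
    {w : ℂ} (hw : w ∈ closedBall (x₀ : ℂ) (r / 2)) :
    ‖f w‖ ≤ M * 3 ^ n / r ^ n := by
  -- On the circle `‖r ^ 2 - (z - x₀) ^ 2‖ = 2 r |Im z|`, so the factor cancels the growth of `f`
  -- and the maximum principle applies to `g`.
  set g : ℂ → F := fun z => ((r : ℂ) ^ 2 - (z - x₀) ^ 2) ^ n • f z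
  have hg_norm (z : ℂ) : ‖g z‖ = ‖(r : ℂ) ^ 2 - (z - x₀) ^ 2‖ ^ n * ‖f z‖ := by
    simp [g, norm_smul]
  have hg_sphere : ∀ z ∈ frontier (ball (x₀ : ℂ) r), ‖g z‖ ≤ M * (2 * r) ^ n := by
    intro z hz
    rw [frontier_ball _ hr.ne'] at hz
    rw [hg_norm, norm_sq_sub_sq_of_mem_sphere hz]
    rcases eq_or_ne z.im 0 with h0 | h0
    · simp only [h0, abs_zero, mul_zero, zero_pow hn, zero_mul]; positivity
    · calc (2 * r * |z.im|) ^ n * ‖f z‖ ≤ (2 * r * |z.im|) ^ n * (M / |z.im| ^ n) := by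
            gcongr; exact hb z hz h0
        _ = M * (2 * r) ^ n := by field_simp; ring
  have hg_diff : DiffContOnCl ℂ g (ball (x₀ : ℂ) r) := by
    refine DifferentiableOn.diffContOnCl ?_
    rw [closure_ball _ hr.ne']
    exact (((differentiable_const _).sub ((differentiable_id.sub_const _).pow 2)).pow n
      |>.differentiableOn).smul hf
  have hgw : ‖g w‖ ≤ M * (2 * r) ^ n :=
    Complex.norm_le_of_forall_mem_frontier_norm_le isBounded_ball hg_diff hg_sphere
      (by rw [closure_ball _ hr.ne']; exact closedBall_subset_closedBall (by linarith) hw)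
  have hlow : (3 / 4 * r ^ 2) ^ n * ‖f w‖ ≤ M * (2 * r) ^ n := by
    refine le_trans ?_ hgw
    rw [hg_norm]
    gcongr
    exact le_norm_sq_sub_sq_of_mem_closedBall hr.le hw
  calc ‖f w‖ ≤ M * (2 * r) ^ n / (3 / 4 * r ^ 2) ^ n := (le_div_iff₀' (by positivity)).2 hlow
    _ ≤ M * (9 / 4 * r) ^ n / (3 / 4 * r ^ 2) ^ n := by gcongr; norm_num
    _ = M * 3 ^ n / r ^ n := by
      rw [div_eq_div_iff (by positivity) (by positivity),
        show 9 / 4 * r = 3 * (3 / 4 * r) by ring, mul_pow 3]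
      ring

section Algebra

variable {𝕜 A : Type*} [Field 𝕜] [Ring A] [Algebra 𝕜 A]

lemma ringInverse_sub_smul_one (a : A) (z : 𝕜) : Ring.inverse (a - z • 1) = -resolvent a z := by
  have h : a - z • 1 = -1 * (algebraMap 𝕜 A z - a) := by
    rw [Algebra.algebraMap_eq_smul_one, neg_one_mul, neg_sub]
  have h1 : Ring.inverse (-1 : A) = -1 := by
    simpa using Ring.inverse_unit (-1 : Aˣ)
  rw [h, Ring.inverse_mul (Or.inl isUnit_one.neg), h1, mul_neg_one, resolvent]

lemma ringInverse_one_sub_smul {z : 𝕜} (hz : z ≠ 0) (a : A) :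
    Ring.inverse (1 - z • a) = z⁻¹ • resolvent a z⁻¹ := by
  simpa [resolvent, Units.smul_def] using
    (units_smul_resolvent_self (r := (Units.mk0 z hz)⁻¹) (a := a)).symm

end Algebra

lemma spectralRadius_le_ofReal {𝕜 A : Type*} [NormedField 𝕜] [Ring A] [Algebra 𝕜 A] {a : A}
    {r : ℝ} (hσ : ∀ z ∈ spectrum 𝕜 a, ‖z‖ ≤ r) :
    spectralRadius 𝕜 a ≤ ENNReal.ofReal r :=
  iSup₂_le fun z hz => by
    simpa [ENNReal.le_ofReal_iff_toReal_le, (norm_nonneg z).trans (hσ z hz)] using hσ z hz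

section BanachAlgebra

variable {A : Type*} [NormedRing A] [NormedAlgebra ℂ A] [CompleteSpace A]

theorem norm_pow_le_of_norm_resolvent_le (a : A) {r R K : ℝ} (hr : 0 ≤ r) (hrR : r < R)
    (hσ : ∀ z ∈ spectrum ℂ a, ‖z‖ ≤ r) (hK : ∀ z : ℂ, ‖z‖ = R → ‖resolvent a z‖ ≤ K) (k : ℕ) :
    ‖a ^ k‖ ≤ R ^ (k + 1) * K := by
  have hR : 0 < R := hr.trans_lt hrR
  set ρ : NNReal := R.toNNReal⁻¹
  have hρ : (ρ : ℝ) = R⁻¹ := by simp [ρ, hR.le]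
  have hρσ : (ρ : ENNReal) < (spectralRadius ℂ a)⁻¹ := by
    rw [ENNReal.lt_inv_iff_lt_inv, ENNReal.coe_inv (by simpa using hR), inv_inv]
    exact (spectralRadius_le_ofReal hσ).trans_lt ((ENNReal.ofReal_lt_ofReal_iff hR).2 hrR)
  set f : ℂ → A := fun z => Ring.inverse (1 - z • a)
  -- `a ^ k` is the `k`-th Taylor coefficient of `f` at `0`, and on the circle `‖z‖ = R⁻¹` we have
  -- `f z = z⁻¹ • resolvent a z⁻¹`.
  have hcoeff : (fun n => ContinuousMultilinearMap.mkPiRing ℂ (Fin n) (a ^ n))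
      = cauchyPowerSeries f 0 ρ :=
    (hasFPowerSeriesOnBall_inverse_one_sub_smul ℂ a).hasFPowerSeriesAt.eq_formalMultilinearSeries
      ((differentiableOn_inverse_one_sub_smul hρσ).hasFPowerSeriesOnBall
        (by simpa [ρ] using hR)).hasFPowerSeriesAt
  have hbound : ∀ z ∈ sphere (0 : ℂ) ρ, ‖(z - 0)⁻¹ ^ k • (z - 0)⁻¹ • f z‖ ≤ R ^ (k + 2) * K := by
    intro z hz
    have hzR : ‖z⁻¹‖ = R := by rw [norm_inv, mem_sphere_zero_iff_norm.1 hz, hρ, inv_inv]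
    have hz0 : z ≠ 0 := by rintro rfl; simp only [inv_zero, norm_zero] at hzR; linarith
    rw [sub_zero, show f z = _ from ringInverse_one_sub_smul hz0 a, norm_smul, norm_smul, norm_smul,
      norm_pow, hzR, ← mul_assoc, ← mul_assoc, ← pow_succ, ← pow_succ]
    exact mul_le_mul_of_nonneg_left (hK _ hzR) (by positivity)
  calc ‖a ^ k‖ = ‖cauchyPowerSeries f 0 ρ k‖ := by
        rw [← hcoeff, ContinuousMultilinearMap.norm_mkPiRing]
    _ ≤ ρ * (R ^ (k + 2) * K) := by
        rw [cauchyPowerSeries, ContinuousMultilinearMap.norm_mkPiRing]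
        exact circleIntegral.norm_two_pi_i_inv_smul_integral_le_of_norm_le_const ρ.2 hbound
    _ = R ^ (k + 1) * K := by rw [hρ]; field_simp; ring

theorem exists_norm_resolvent_le_div_abs_im_pow (a : A) (hre : ∀ z ∈ spectrum ℂ a, z.im = 0)
    {M c : ℝ} {n : ℕ} (hc : 0 < c)
    (hres : ∀ z : ℂ, 0 < |z.im| → |z.im| < c → ‖resolvent a z‖ ≤ M / |z.im| ^ n) (ρ : ℝ) :
    ∃ M' > 0, ∀ z : ℂ, z.im ≠ 0 → ‖z‖ ≤ ρ → ‖resolvent a z‖ ≤ M' / |z.im| ^ n := by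
  set K := closedBall (0 : ℂ) ρ ∩ {z | c ≤ |z.im|}
  have hK : IsCompact K := (isCompact_closedBall _ _).inter_right
    (isClosed_le continuous_const Complex.continuous_im.abs)
  have hcont : ContinuousOn (resolvent a) K := fun z hz =>
    have hz_im : z.im ≠ 0 := abs_pos.1 (hc.trans_le hz.2)
    (hasDerivAt_resolvent_const_left (notMem_iff.1 fun hσ => hz_im (hre z hσ)))
      |>.continuousAt.continuousWithinAt
  obtain ⟨C, hC⟩ := hK.exists_bound_of_continuousOn hcont
  refine ⟨max (max M (C * ρ ^ n)) 1, by positivity, fun z hz_im hz => ?_⟩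
  have hz_im' : 0 < |z.im| := abs_pos.2 hz_im
  rw [le_div_iff₀ (by positivity)]
  rcases lt_or_ge |z.im| c with hnear | hfar
  · calc ‖resolvent a z‖ * |z.im| ^ n ≤ M := (le_div_iff₀ (by positivity)).1 (hres z hz_im' hnear)
      _ ≤ _ := (le_max_left _ _).trans (le_max_left _ _)
  · have hCz := hC z ⟨mem_closedBall_zero_iff.2 hz, hfar⟩
    calc ‖resolvent a z‖ * |z.im| ^ n ≤ C * ρ ^ n := by
          gcongr
          · exact (norm_nonneg _).trans hCz
          · exact (Complex.abs_im_le_norm z).trans hz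
      _ ≤ _ := (le_max_right _ _).trans (le_max_left _ _)

theorem norm_resolvent_add_le_of_norm_eq (s : A) {c ε M : ℝ} {n : ℕ} (hn : n ≠ 0) (hε : 0 < ε)
    (hM : 0 ≤ M) (hσ : ∀ z ∈ spectrum ℂ s, z.im = 0 ∧ |z.re - c| ≤ ε)
    (hres : ∀ v : ℂ, v.im ≠ 0 → ‖v - c‖ ≤ 3 * ε → ‖resolvent s v‖ ≤ M / |v.im| ^ n)
    {u : ℂ} (hu : ‖u‖ = 2 * ε) :
    ‖resolvent s (c + u)‖ ≤ M * 4 ^ n / ε ^ n := by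
  have hw_im : (c + u).im = u.im := by simp
  have hw_sub : (c + u) - c = u := by ring
  rcases le_or_gt (ε / 4) |u.im| with hfar | hnear
  · have hu_im : 0 < |u.im| := by linarith
    calc ‖resolvent s (c + u)‖ ≤ M / |u.im| ^ n := by
          rw [← hw_im]
          exact hres _ (by rw [hw_im]; exact abs_pos.1 hu_im) (by rw [hw_sub, hu]; linarith)
      _ ≤ M / (ε / 4) ^ n := by gcongr
      _ = M * 4 ^ n / ε ^ n := by rw [div_pow, div_div_eq_mul_div]
  · -- Near the real axis, `c + u` lies well inside a disc centred on the real axis that avoids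
    -- the spectrum, and the growth bound on its boundary circle transfers inside.
    have hu_sq : u.re ^ 2 + u.im ^ 2 = (2 * ε) ^ 2 := by
      rw [← hu, Complex.sq_norm, Complex.normSq_apply]; ring
    have hu_re : 7 / 4 * ε < |u.re| := by
      nlinarith [sq_abs u.re, sq_abs u.im, abs_nonneg u.re, abs_nonneg u.im]
    set x₀ : ℝ := c + u.re
    have hdisc : ∀ v ∈ closedBall (x₀ : ℂ) (3 / 4 * ε), v ∈ resolventSet ℂ s := by
      intro v hv
      by_contra hvσ
      have hv' : |v.re - x₀| ≤ 3 / 4 * ε :=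
        (Complex.abs_re_le_norm (v - x₀)).trans (by simpa using mem_closedBall_iff_norm.1 hv)
      have := (hσ v hvσ).2
      rw [abs_le] at hv' this
      rw [lt_abs] at hu_re
      rcases hu_re with h | h <;> linarith
    have hdiff : DifferentiableOn ℂ (resolvent s) (closedBall (x₀ : ℂ) (3 / 4 * ε)) :=
      fun v hv =>
        (hasDerivAt_resolvent_const_left (hdisc v hv)).differentiableAt.differentiableWithinAt
    have hsphere : ∀ v ∈ sphere (x₀ : ℂ) (3 / 4 * ε), v.im ≠ 0 →
        ‖resolvent s v‖ ≤ M / |v.im| ^ n := by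
      intro v hv hv_im
      refine hres v hv_im ?_
      calc ‖v - c‖ = ‖(v - x₀) + u.re‖ := by congr 1; simp only [Complex.ofReal_add, x₀]; ring
        _ ≤ 3 / 4 * ε + 2 * ε := by
          refine (norm_add_le _ _).trans (add_le_add (mem_sphere_iff_norm.1 hv).le ?_)
          rw [Complex.norm_real, Real.norm_eq_abs, ← hu]
          exact Complex.abs_re_le_norm u
        _ ≤ 3 * ε := by linarith
    have hw : c + u ∈ closedBall (x₀ : ℂ) (3 / 4 * ε / 2) := by
      rw [mem_closedBall_iff_norm]
      have : (c + u) - x₀ = u.im * Complex.I := by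
        apply Complex.ext <;> simp [x₀]
      rw [this, norm_mul, Complex.norm_I, mul_one, Complex.norm_real, Real.norm_eq_abs]
      linarith
    calc ‖resolvent s (c + u)‖ ≤ M * 3 ^ n / (3 / 4 * ε) ^ n :=
          norm_le_of_forall_mem_sphere_norm_le_div_abs_im_pow hn (by positivity) hM hdiff
            hsphere hw
      _ = M * 4 ^ n / ε ^ n := by
          rw [mul_pow, div_pow]
          field_simp

theorem norm_sub_algebraMap_pow_le (s : A) {c ε M : ℝ} {n : ℕ} (hn : n ≠ 0) (hε : 0 < ε)
    (hM : 0 ≤ M) (hσ : ∀ z ∈ spectrum ℂ s, z.im = 0 ∧ |z.re - c| ≤ ε)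
    (hres : ∀ v : ℂ, v.im ≠ 0 → ‖v - c‖ ≤ 3 * ε → ‖resolvent s v‖ ≤ M / |v.im| ^ n) (k : ℕ) :
    ‖(s - algebraMap ℂ A c) ^ k‖ ≤ (2 * ε) ^ (k + 1) * (M * 4 ^ n / ε ^ n) := by
  refine norm_pow_le_of_norm_resolvent_le _ hε.le (by linarith) (fun z hz => ?_) (fun u hu => ?_) k
  · rw [← sub_singleton_eq] at hz
    obtain ⟨t, ht, _, rfl, rfl⟩ := hz
    obtain ⟨ht_im, ht_re⟩ := hσ t ht
    rwa [← (Complex.abs_re_eq_norm).2 (by simp [ht_im])]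
  · have : resolvent (s - algebraMap ℂ A c) u = resolvent s (c + u) := by
      simp only [resolvent, map_add]; congr 1; abel
    rw [this]
    exact norm_resolvent_add_le_of_norm_eq s hn hε hM hσ hres hu

end BanachAlgebra

section Restriction

variable {𝕜 X : Type*} [NontriviallyNormedField 𝕜] [NormedAddCommGroup X] [NormedSpace 𝕜 X]

lemma coe_resolvent_restrict_apply {p : Submodule 𝕜 X} {S : p →L[𝕜] p} {T : X →L[𝕜] X}
    (hST : ∀ x : p, (S x : X) = T x) {z : 𝕜} (hS : z ∈ resolventSet 𝕜 S)
    (hT : z ∈ resolventSet 𝕜 T) (y : p) :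
    (resolvent S z y : X) = resolvent T z y := by
  have hx : (algebraMap 𝕜 (X →L[𝕜] X) z - T) (resolvent S z y : X) = y := by
    have := congr(($(Ring.mul_inverse_cancel _ hS) y : X))
    simpa [Algebra.algebraMap_eq_smul_one, hST, resolvent] using this
  calc (resolvent S z y : X)
      = (resolvent T z * (algebraMap 𝕜 (X →L[𝕜] X) z - T)) (resolvent S z y) := by
        rw [show resolvent T z * _ = 1 from Ring.inverse_mul_cancel _ hT]; rfl
    _ = resolvent T z y := by rw [← hx]; rfl

lemma norm_resolvent_restrict_le {p : Submodule 𝕜 X} {S : p →L[𝕜] p} {T : X →L[𝕜] X}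
    (hST : ∀ x : p, (S x : X) = T x) {z : 𝕜} (hS : z ∈ resolventSet 𝕜 S)
    (hT : z ∈ resolventSet 𝕜 T) :
    ‖resolvent S z‖ ≤ ‖resolvent T z‖ :=
  ContinuousLinearMap.opNorm_le_bound _ (norm_nonneg _) fun y => by
    rw [← Submodule.norm_coe, coe_resolvent_restrict_apply hST hS hT]
    exact (resolvent T z).le_opNorm y

end Restriction

lemma le_mul_of_forall_mem_Ioo_le_mul {x K t s : ℝ} (hts : t < s)
    (h : ∀ ε ∈ Ioo t s, x ≤ K * ε) : x ≤ K * t :=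
  ge_of_tendsto ((continuous_const_mul K).tendsto t |>.mono_left nhdsWithin_le_nhds)
    (eventually_of_mem (Ioo_mem_nhdsGT hts) h)

lemma two_mul_pow_succ_mul_div_pow_le {ε τ M : ℝ} {n k : ℕ} (hnk : n ≤ k) (hε : 0 < ε)
    (hετ : ε ≤ 2 * τ) (hM : 0 ≤ M) :
    (2 * ε) ^ (k + 1) * (M * 4 ^ n / ε ^ n) ≤ 4 ^ k * τ ^ k * (2 * M * 4 ^ n / τ ^ n) * ε := by
  have hτ : 0 < τ := by linarith
  obtain ⟨j, rfl⟩ := Nat.exists_eq_add_of_le hnk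
  calc (2 * ε) ^ (n + j + 1) * (M * 4 ^ n / ε ^ n)
      = 2 * 2 ^ n * (2 * ε) ^ j * (M * 4 ^ n) * ε := by field_simp; ring
    _ ≤ 2 * 4 ^ n * (4 * τ) ^ j * (M * 4 ^ n) * ε := by
        gcongr 2 * ?_ * ?_ * _ * _
        · exact pow_le_pow_left₀ (by norm_num) (by norm_num) n
        · exact pow_le_pow_left₀ (by positivity) (by linarith) j
    _ = 4 ^ (n + j) * τ ^ (n + j) * (2 * M * 4 ^ n / τ ^ n) * ε := by field_simp; ring

theorem stmt8_general {X : Type*} [NormedAddCommGroup X] [NormedSpace ℂ X] [CompleteSpace X]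
    (T : X →L[ℂ] X) (hT0 : T ≠ 0) (n : ℕ) (hn : 1 ≤ n)
    (hre : ∀ z ∈ spectrum ℂ T, z.im = 0) (M c : ℝ) (hc : 0 < c)
    (hres : ∀ z : ℂ, 0 < |z.im| → |z.im| < c →
      ‖Ring.inverse (T - z • (1 : X →L[ℂ] X))‖ ≤ M / |z.im| ^ n)
    (L : ℝ → ℝ → Submodule ℂ X)
    (hLclosed : ∀ a b, IsClosed ((L a b : Set X)))
    (Trest : ∀ a b, ↥(L a b) →L[ℂ] ↥(L a b))
    (hTrest : ∀ a b, ∀ x : ↥(L a b), (Trest a b x : X) = T x)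
    (hspec : ∀ a b, spectrum ℂ (Trest a b) ⊆
      spectrum ℂ T ∩ {z : ℂ | z.im = 0 ∧ z.re ∈ Set.Icc a b}) :
    ∃ C > (0 : ℝ), ∀ k : ℕ, n ≤ k → ∀ z ∈ spectrum ℂ T, ∀ a b : ℝ,
      z.re ∈ Set.Icc a b → b - a ≤ ‖T‖ →
      ‖(Trest a b - z • (1 : ↥(L a b) →L[ℂ] ↥(L a b))) ^ k‖ ≤
        4 ^ k * ‖T‖ ^ k * C * (b - a) := by
  have hT : 0 < ‖T‖ := norm_pos_iff.2 hT0
  obtain ⟨Mt, hMt, hMt_le⟩ := exists_norm_resolvent_le_div_abs_im_pow T hre hc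
    (fun z h₁ h₂ => by simpa [ringInverse_sub_smul_one] using hres z h₁ h₂) (7 * ‖T‖)
  refine ⟨2 * Mt * 4 ^ n / ‖T‖ ^ n, by positivity, fun k hk z hz a b hab hlen => ?_⟩
  have : CompleteSpace (L a b) := (hLclosed a b).completeSpace_coe
  have hz_eq : z • (1 : ↥(L a b) →L[ℂ] ↥(L a b)) = algebraMap ℂ _ (z.re : ℂ) := by
    rw [Algebra.algebraMap_eq_smul_one,
      show (z.re : ℂ) = z from Complex.ext rfl (by simp [hre z hz])]
  have hz_norm : |z.re| ≤ ‖T‖ := (Complex.abs_re_le_norm z).trans <|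
    (norm_le_norm_mul_of_mem hz).trans (mul_le_of_le_one_right hT.le ContinuousLinearMap.norm_id_le)
  refine le_mul_of_forall_mem_Ioo_le_mul (s := 2 * ‖T‖) (by linarith) fun ε hε => ?_
  have hε0 : 0 < ε := by linarith [hab.1.trans hab.2, hε.1]
  rw [hz_eq]
  refine (norm_sub_algebraMap_pow_le (Trest a b) (by omega) hε0 hMt.le (fun w hw => ?_)
    (fun v hv_im hv => ?_) k).trans (two_mul_pow_succ_mul_div_pow_le hk hε0 hε.2.le hMt.le)
  · obtain ⟨-, hw_im, hw_re⟩ := hspec a b hw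
    exact ⟨hw_im, abs_sub_le_iff.2 ⟨by linarith [hw_re.2, hab.1, hε.1],
      by linarith [hw_re.1, hab.2, hε.1]⟩⟩
  · refine (norm_resolvent_restrict_le (hTrest a b)
      (notMem_iff.1 fun hσv => hv_im (hspec a b hσv).2.1)
      (notMem_iff.1 fun hσv => hv_im (hre v hσv))).trans (hMt_le v hv_im ?_)
    calc ‖v‖ ≤ ‖v - z.re‖ + ‖(z.re : ℂ)‖ := norm_le_norm_sub_add _ _
      _ ≤ 7 * ‖T‖ := by rw [Complex.norm_real, Real.norm_eq_abs]; linarith [hε.2]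

/-- Let `T ≠ 0` have real spectrum and resolvent growth of finite order `n`
near the real axis. Assume that every compact interval `[a,b]` admits a maximal spectral
subspace `L a b` with restriction `Trest a b`. Then there is `C > 0` such that for every
`k ≥ n`, every `λ ∈ σ(T)` and every interval `[a,b] ∋ Re λ` of length `≤ ‖T‖`,
`‖(T|L_Δ − λ)ᵏ‖ ≤ 4ᵏ ‖T‖ᵏ C ℓ(Δ)`. -/
theorem stmt8 {X : Type*} [NormedAddCommGroup X] [NormedSpace ℂ X] [CompleteSpace X]
    (T : X →L[ℂ] X) (hT0 : T ≠ 0) (n : ℕ) (hn : 1 ≤ n)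
    (hre : ∀ z ∈ spectrum ℂ T, z.im = 0) (M c : ℝ) (hM : 0 < M) (hc : 0 < c)
    (hres : ∀ z : ℂ, 0 < |z.im| → |z.im| < c →
      ‖Ring.inverse (T - z • (1 : X →L[ℂ] X))‖ ≤ M / |z.im| ^ n)
    (L : ℝ → ℝ → Submodule ℂ X)
    (hLclosed : ∀ a b, IsClosed ((L a b : Set X)))
    (hLinv : ∀ a b, ∀ x ∈ L a b, T x ∈ L a b)
    (Trest : ∀ a b, ↥(L a b) →L[ℂ] ↥(L a b))
    (hTrest : ∀ a b, ∀ x : ↥(L a b), (Trest a b x : X) = T x)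
    (hspec : ∀ a b, spectrum ℂ (Trest a b) ⊆
      spectrum ℂ T ∩ {z : ℂ | z.im = 0 ∧ z.re ∈ Set.Icc a b})
    (hmax : ∀ a b, ∀ L' : Submodule ℂ X, (∀ x ∈ L', T x ∈ L') →
      (∀ T' : ↥L' →L[ℂ] ↥L', (∀ x : ↥L', (T' x : X) = T x) →
        spectrum ℂ T' ⊆ {z : ℂ | z.im = 0 ∧ z.re ∈ Set.Icc a b}) →
      L' ≤ L a b) :
    ∃ C > (0 : ℝ), ∀ k : ℕ, n ≤ k → ∀ z ∈ spectrum ℂ T, ∀ a b : ℝ,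
      z.re ∈ Set.Icc a b → b - a ≤ ‖T‖ →
      ‖(Trest a b - z • (1 : ↥(L a b) →L[ℂ] ↥(L a b))) ^ k‖ ≤
        4 ^ k * ‖T‖ ^ k * C * (b - a) :=
  stmt8_general T hT0 n hn hre M c hc hres L hLclosed Trest hTrest hspec
end

section
/- Let A be a bounded operator in a G-space (H, [·,·]) and K ⊂ ℂ a compact set. Then K is of positive type with respect to A if and only if there exist an open neighbourhood U of K in ℂ and numbers ε, δ > 0 such that for all x ∈ H and all λ ∈ U: ‖(A − λ)x‖ ≤ ε‖x‖ implies [x,x] ≥ δ‖x‖². -/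
open Filter
open scoped InnerProductSpace Topology

/-!
If the uniform bound fails for `U` the `1/(n+1)`-thickening of `K` and `ε = δ = 1/(n+1)`, there
are a point `z` at distance `< 1/(n+1)` from `K` and a unit vector `u` with `‖(A - z)u‖ ≤ 1/(n+1)` and
`[u,u] < 1/(n+1)`. Compactness of `K` lets the points accumulate at some `a ∈ K`; the vectors
along that subsequence are approximate eigenvectors for `a` with `liminf [u,u] ≤ 0`.
Conversely, the uniform bound immediately gives `[x_n,x_n] ≥ δ` eventually.
-/

section PositiveType

variable {H : Type*} [NormedAddCommGroup H] [InnerProductSpace ℂ H]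

/-- Vacuous unless `z` is an approximate eigenvalue of `A`, so `∀ z ∈ K, IsPositiveTypeAt G A z`
says that `K` is of positive type with respect to `A`. -/
def IsPositiveTypeAt (G A : H →L[ℂ] H) (z : ℂ) : Prop :=
  ∀ x : ℕ → H, (∀ n, ‖x n‖ = 1) → Tendsto (fun n => ‖(A - z • 1) (x n)‖) atTop (𝓝 0) →
    0 < liminf (fun n => (⟪G (x n), x n⟫_ℂ).re) atTop

lemma re_inner_apply_self_eq_rayleighQuotient (G : H →L[ℂ] H) {x : H} (hx : ‖x‖ = 1) :
    (⟪G x, x⟫_ℂ).re = G.rayleighQuotient x := by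
  rw [ContinuousLinearMap.rayleighQuotient, hx, one_pow, div_one,
    ContinuousLinearMap.reApplyInnerSelf_apply, RCLike.re_to_complex]

lemma abs_re_inner_apply_self_le (G : H →L[ℂ] H) {x : H} (hx : ‖x‖ = 1) :
    |(⟪G x, x⟫_ℂ).re| ≤ ‖G‖ := by
  simpa [re_inner_apply_self_eq_rayleighQuotient G hx] using G.rayleighQuotient_le_norm x

lemma exists_norm_eq_one_of_re_inner_apply_self_lt (T G : H →L[ℂ] H) {ε δ : ℝ} {x : H}
    (hTx : ‖T x‖ ≤ ε * ‖x‖) (hGx : (⟪G x, x⟫_ℂ).re < δ * ‖x‖ ^ 2) :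
    ∃ u : H, ‖u‖ = 1 ∧ ‖T u‖ ≤ ε ∧ (⟪G u, u⟫_ℂ).re < δ := by
  have hx : x ≠ 0 := by
    rintro rfl
    simp at hGx
  have hxpos : 0 < ‖x‖ := norm_pos_iff.mpr hx
  have hu : ‖(‖x‖⁻¹ : ℂ) • x‖ = 1 := norm_smul_inv_norm hx
  refine ⟨(‖x‖⁻¹ : ℂ) • x, hu, ?_, ?_⟩
  · rw [map_smul, norm_smul, norm_inv, Complex.norm_real, norm_norm, inv_mul_le_iff₀ hxpos,
      mul_comm]
    exact hTx
  · rw [re_inner_apply_self_eq_rayleighQuotient G hu,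
      G.rayleigh_smul x (by simpa using hxpos.ne'), div_lt_iff₀ (by positivity)]
    exact hGx

lemma norm_sub_smul_one_apply_le {𝕜 E : Type*} [NormedField 𝕜] [SeminormedAddCommGroup E]
    [NormedSpace 𝕜 E] (A : E →L[𝕜] E) (z a : 𝕜) (x : E) :
    ‖(A - a • 1) x‖ ≤ ‖(A - z • 1) x‖ + ‖z - a‖ * ‖x‖ := by
  have hsplit : (A - a • 1) x = (A - z • 1) x + (z - a) • x := by
    simp only [sub_apply, smul_apply, one_apply_eq_self, sub_smul]
    abel
  rw [hsplit, ← norm_smul]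
  exact norm_add_le _ _

variable {G A : H →L[ℂ] H}

lemma isPositiveTypeAt_of_forall_norm_le {z : ℂ} {ε δ : ℝ} (hε : 0 < ε) (hδ : 0 < δ)
    (h : ∀ x : H, ‖(A - z • 1) x‖ ≤ ε * ‖x‖ → δ * ‖x‖ ^ 2 ≤ (⟪G x, x⟫_ℂ).re) :
    IsPositiveTypeAt G A z := by
  intro x hx hAx
  have hδle : ∀ᶠ n in atTop, δ ≤ (⟪G (x n), x n⟫_ℂ).re := by
    filter_upwards [hAx.eventually_le_const hε] with n hn
    simpa [hx n] using h (x n) (by simpa [hx n] using hn)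
  have hbdd : IsCoboundedUnder (· ≥ ·) atTop (fun n => (⟪G (x n), x n⟫_ℂ).re) :=
    isCoboundedUnder_ge_of_le atTop fun n => (abs_le.mp (abs_re_inner_apply_self_le G (hx n))).2
  exact hδ.trans_le (le_liminf_of_le hbdd hδle)

lemma not_isPositiveTypeAt_of_tendsto {a : ℂ} {z : ℕ → ℂ} {x : ℕ → H} {r : ℕ → ℝ}
    (hz : Tendsto z atTop (𝓝 a)) (hx : ∀ n, ‖x n‖ = 1)
    (hAx : Tendsto (fun n => ‖(A - z n • 1) (x n)‖) atTop (𝓝 0))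
    (hGx : ∀ n, (⟪G (x n), x n⟫_ℂ).re ≤ r n) (hr : Tendsto r atTop (𝓝 0)) :
    ¬ IsPositiveTypeAt G A a := by
  intro h
  have hAa : Tendsto (fun n => ‖(A - a • 1) (x n)‖) atTop (𝓝 0) := by
    refine squeeze_zero (fun _ => norm_nonneg _)
      (fun n => by simpa [hx n] using norm_sub_smul_one_apply_le A (z n) a (x n)) ?_
    simpa using hAx.add (tendsto_iff_norm_sub_tendsto_zero.mp hz)
  have hbdd : IsBoundedUnder (· ≥ ·) atTop (fun n => (⟪G (x n), x n⟫_ℂ).re) :=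
    isBoundedUnder_of ⟨-‖G‖, fun n => (abs_le.mp (abs_re_inner_apply_self_le G (hx n))).1⟩
  have hle : liminf (fun n => (⟪G (x n), x n⟫_ℂ).re) atTop ≤ 0 :=
    hr.liminf_eq ▸ liminf_le_liminf (Eventually.of_forall hGx) hbdd hr.isCoboundedUnder_ge
  exact (h x hx hAa).not_ge hle

theorem exists_isOpen_forall_re_inner_apply_self_ge {K : Set ℂ} (hK : IsCompact K)
    (h : ∀ z ∈ K, IsPositiveTypeAt G A z) :
    ∃ U : Set ℂ, IsOpen U ∧ K ⊆ U ∧ ∃ ε > (0 : ℝ), ∃ δ > (0 : ℝ),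
      ∀ z ∈ U, ∀ x : H, ‖(A - z • 1) x‖ ≤ ε * ‖x‖ → δ * ‖x‖ ^ 2 ≤ (⟪G x, x⟫_ℂ).re := by
  by_contra hcon
  push Not at hcon
  set r : ℕ → ℝ := fun n => 1 / (n + 1)
  have hrpos : ∀ n, 0 < r n := fun n => by positivity
  have hbad : ∀ n, ∃ k ∈ K, ∃ z : ℂ, dist z k < r n ∧ ∃ u : H, ‖u‖ = 1 ∧
      ‖(A - z • 1) u‖ ≤ r n ∧ (⟪G u, u⟫_ℂ).re < r n := by
    intro n
    obtain ⟨z, hz, x, hAx, hGx⟩ := hcon (Metric.thickening (r n) K) Metric.isOpen_thickening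
      (Metric.self_subset_thickening (hrpos n) K) (r n) (hrpos n) (r n) (hrpos n)
    obtain ⟨k, hk, hzk⟩ := Metric.mem_thickening_iff.mp hz
    exact ⟨k, hk, z, hzk, exists_norm_eq_one_of_re_inner_apply_self_lt _ G hAx hGx⟩
  choose k hk z hzk u hu hAu hGu using hbad
  obtain ⟨a, ha, φ, hφ, hka⟩ := hK.tendsto_subseq hk
  have hr : Tendsto (fun n => r (φ n)) atTop (𝓝 0) :=
    tendsto_one_div_add_atTop_nhds_zero_nat.comp hφ.tendsto_atTop
  refine not_isPositiveTypeAt_of_tendsto (x := fun n => u (φ n)) ?_ (fun n => hu (φ n))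
    (squeeze_zero (fun _ => norm_nonneg _) (fun n => hAu (φ n)) hr)
    (fun n => (hGu (φ n)).le) hr (h a ha)
  refine hka.congr_dist (squeeze_zero (fun _ => dist_nonneg) (fun n => ?_) hr)
  rw [dist_comm]
  exact (hzk (φ n)).le

end PositiveType

theorem stmt9_general {H : Type*} [NormedAddCommGroup H] [InnerProductSpace ℂ H]
    (G : H →L[ℂ] H) (A : H →L[ℂ] H) (K : Set ℂ) (hK : IsCompact K) :
    (∀ z ∈ K, ∀ x : ℕ → H, (∀ n, ‖x n‖ = 1) →
        Tendsto (fun n => ‖(A - z • 1) (x n)‖) atTop (𝓝 0) →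
        0 < liminf (fun n => (⟪G (x n), x n⟫_ℂ).re) atTop) ↔
      ∃ U : Set ℂ, IsOpen U ∧ K ⊆ U ∧ ∃ ε > (0 : ℝ), ∃ δ > (0 : ℝ),
        ∀ z ∈ U, ∀ x : H, ‖(A - z • 1) x‖ ≤ ε * ‖x‖ → δ * ‖x‖ ^ 2 ≤ (⟪G x, x⟫_ℂ).re :=
  ⟨exists_isOpen_forall_re_inner_apply_self_ge hK,
    fun ⟨_, _, hKU, _, hε, _, hδ, h⟩ z hz =>
      isPositiveTypeAt_of_forall_norm_le hε hδ (h z (hKU hz))⟩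

/-- In a G-space (Hilbert space `H` with the bounded Hermitian form
`[x,y] = ⟪Gx,y⟫` for a bounded selfadjoint `G`), a compact set `K ⊆ ℂ` is of positive
type with respect to a bounded operator `A` (every approximate eigenvalue of `A` in `K`
is of positive type) iff there are an open neighbourhood `U` of `K` and `ε, δ > 0` such
that `‖(A−λ)x‖ ≤ ε‖x‖` for some `λ ∈ U` implies `[x,x] ≥ δ‖x‖²`. -/
theorem stmt9 {H : Type*} [NormedAddCommGroup H] [InnerProductSpace ℂ H] [CompleteSpace H]
    (G : H →L[ℂ] H) (hG : IsSelfAdjoint G) (A : H →L[ℂ] H) (K : Set ℂ) (hK : IsCompact K) :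
    (∀ z ∈ K, ∀ x : ℕ → H, (∀ n, ‖x n‖ = 1) →
        Tendsto (fun n => ‖(A - z • 1) (x n)‖) atTop (𝓝 0) →
        0 < liminf (fun n => (⟪G (x n), x n⟫_ℂ).re) atTop) ↔
      ∃ U : Set ℂ, IsOpen U ∧ K ⊆ U ∧ ∃ ε > (0 : ℝ), ∃ δ > (0 : ℝ),
        ∀ z ∈ U, ∀ x : H, ‖(A - z • 1) x‖ ≤ ε * ‖x‖ → δ * ‖x‖ ^ 2 ≤ (⟪G x, x⟫_ℂ).re :=
  stmt9_general G A K hK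
end

section
/- Let N be a bounded normal operator in a Krein space (H, [·,·]) such that the real part (N+N⁺)/2 and the imaginary part (N−N⁺)/(2i) both have real spectra. Then σ(N) = σ_ap(N), i.e. every spectral point of N is an approximate eigenvalue. -/
/-!
If `z ∈ σ(N)` were not an approximate eigenvalue, `N - z` would be bounded below with closed
range, hence not surjective, so `z̄` is an eigenvalue of `N*` and therefore of `N⁺ = J N* J`.
The eigenspace `V = ker (N⁺ - z̄)` is invariant under `N`, and on `V` the real and imaginary
parts of `N` are `(N + z̄)/2` and `(N - z̄)/(2i)`. Their spectra on `V` lie in the real spectra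
of the parts on the whole space, which pins `σ(N|_V)` down to `{z}`. But `N|_V - z` is still
bounded below, so by Gelfand's formula its spectral radius is positive: a contradiction.
-/

open Filter ContinuousLinearMap
open scoped InnerProductSpace Topology NNReal ENNReal ComplexConjugate

theorem Complex.eq_of_im_half_add_conj_eq_zero {w z : ℂ} (h₁ : (2⁻¹ * w + 2⁻¹ * conj z).im = 0)
    (h₂ : ((2 * I)⁻¹ * w + -(2 * I)⁻¹ * conj z).im = 0) : w = z := by
  simp only [add_im, mul_im, inv_re, re_ofNat, normSq_ofNat, div_self_mul_self', inv_im, im_ofNat,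
    neg_zero, zero_div, zero_mul, add_zero, conj_im, mul_neg, conj_re, mul_inv_rev, inv_I, neg_mul,
    neg_neg, neg_im, mul_re, I_re, I_im, mul_zero, sub_self, one_mul, zero_add] at h₁ h₂
  apply Complex.ext <;> linarith

namespace ContinuousLinearMap

section ApproxPointSpectrum

variable {𝕜 E : Type*} [RCLike 𝕜] [NormedAddCommGroup E] [NormedSpace 𝕜 E]

def approxPointSpectrum (T : E →L[𝕜] E) : Set 𝕜 :=
  {z | ∃ x : ℕ → E, (∀ n, ‖x n‖ = 1) ∧ Tendsto (fun n => ‖(T - z • 1) (x n)‖) atTop (𝓝 0)}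

theorem not_tendsto_norm_apply_of_antilipschitz {S : E →L[𝕜] E} {K : ℝ≥0}
    (hS : AntilipschitzWith K S) {x : ℕ → E} (hx : ∀ n, ‖x n‖ = 1) :
    ¬Tendsto (fun n => ‖S (x n)‖) atTop (𝓝 0) := by
  intro h
  have hK : Tendsto (fun n => (K : ℝ) * ‖S (x n)‖) atTop (𝓝 0) := by
    simpa using h.const_mul (K : ℝ)
  have : (1 : ℝ) ≤ 0 := ge_of_tendsto' hK fun n => hx n ▸ S.bound_of_antilipschitz hS (x n)
  norm_num at this

theorem notMem_approxPointSpectrum_iff {T : E →L[𝕜] E} {z : 𝕜} :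
    z ∉ T.approxPointSpectrum ↔ ∃ K, AntilipschitzWith K ⇑(T - z • 1) := by
  constructor
  · intro hz
    by_contra! h
    have hbad : ∀ n : ℕ, ∃ x, (n + 1 : ℝ) * ‖(T - z • 1) x‖ < ‖x‖ := fun n => by
      by_contra! hn
      exact h _ ((T - z • 1).antilipschitz_of_bound (K := n + 1) (by exact_mod_cast hn))
    choose x hx using hbad
    have hx0 : ∀ n, x n ≠ 0 := fun n h0 => by simpa [h0] using hx n
    refine hz ⟨fun n => (‖x n‖⁻¹ : 𝕜) • x n, fun n => norm_smul_inv_norm (hx0 n), ?_⟩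
    refine squeeze_zero (fun n => norm_nonneg _) (fun n => ?_)
      tendsto_one_div_add_atTop_nhds_zero_nat
    rw [map_smul, norm_smul, norm_inv, RCLike.norm_ofReal, abs_norm,
      inv_mul_le_iff₀ (norm_pos_iff.2 (hx0 n)), mul_one_div, le_div_iff₀' (by positivity)]
    exact (hx n).le
  · rintro ⟨K, hK⟩ ⟨x, hx, hT⟩
    exact not_tendsto_norm_apply_of_antilipschitz hK hx hT

theorem approxPointSpectrum_subset_spectrum (T : E →L[𝕜] E) :
    T.approxPointSpectrum ⊆ spectrum 𝕜 T := by
  intro z hz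
  rw [spectrum.mem_iff]
  rintro ⟨u, hu⟩
  have hunit : (T - z • 1) = ((-u : (E →L[𝕜] E)ˣ) : E →L[𝕜] E) := by
    rw [Units.val_neg, hu, Algebra.algebraMap_eq_smul_one, neg_sub]
  have hanti : ∃ K, AntilipschitzWith K ⇑(T - z • 1) :=
    hunit ▸ ⟨_, (ContinuousLinearEquiv.unitsEquiv 𝕜 E (-u)).antilipschitz⟩
  exact notMem_approxPointSpectrum_iff.2 hanti hz

end ApproxPointSpectrum

section Hilbert

variable {𝕜 H : Type*} [RCLike 𝕜] [NormedAddCommGroup H] [InnerProductSpace 𝕜 H] [CompleteSpace H]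

theorem isUnit_of_antilipschitz_of_ker_adjoint_eq_bot {S : H →L[𝕜] H} {K : ℝ≥0}
    (hS : AntilipschitzWith K S) (h : (adjoint S).ker = ⊥) : IsUnit S := by
  rw [isUnit_iff_bijective, bijective_iff_dense_range_and_antilipschitz,
    Submodule.topologicalClosure_eq_top_iff, orthogonal_range]
  exact ⟨h, K, hS⟩

theorem exists_ne_zero_adjoint_apply_eq_of_antilipschitz {T : H →L[𝕜] H} {z : 𝕜}
    (hz : z ∈ spectrum 𝕜 T) {K : ℝ≥0} (hK : AntilipschitzWith K ⇑(T - z • 1)) :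
    ∃ u ≠ 0, adjoint T u = conj z • u := by
  have hker : (adjoint (T - z • 1)).ker ≠ ⊥ := by
    refine fun h => spectrum.mem_iff.1 hz ?_
    simpa [Algebra.algebraMap_eq_smul_one] using
      (isUnit_of_antilipschitz_of_ker_adjoint_eq_bot hK h).neg
  obtain ⟨u, hu, hu0⟩ := (Submodule.ne_bot_iff _).1 hker
  refine ⟨u, hu0, ?_⟩
  rw [← star_eq_adjoint, star_sub, star_smul, star_one] at hu
  simpa [sub_eq_zero, star_eq_adjoint] using hu

end Hilbert

section NormedField

variable {𝕜 E : Type*} [NormedField 𝕜] [NormedAddCommGroup E] [NormedSpace 𝕜 E]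

theorem apply_mem_ker_of_commute {f D : E →L[𝕜] E} (h : Commute f D) :
    ∀ x ∈ D.ker, f x ∈ D.ker := fun x hx => by
  simp only [LinearMap.mem_ker, coe_coe] at hx ⊢
  simpa [hx] using (DFunLike.congr_fun h.eq x).symm

theorem isUnit_restrict_ker {S D : E →L[𝕜] E} (hS : IsUnit S) (h : Commute S D) :
    IsUnit (S.restrict (apply_mem_ker_of_commute h)) := by
  obtain ⟨u, rfl⟩ := hS
  have h' := apply_mem_ker_of_commute h.units_inv_left
  refine ⟨⟨_, (↑u⁻¹ : E →L[𝕜] E).restrict h', ?_, ?_⟩, rfl⟩ <;> ext x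
  · exact DFunLike.congr_fun u.mul_inv (x : E)
  · exact DFunLike.congr_fun u.inv_mul (x : E)

theorem spectrum_restrict_ker_subset {f D : E →L[𝕜] E} (h : Commute f D) :
    spectrum 𝕜 (f.restrict (apply_mem_ker_of_commute h)) ⊆ spectrum 𝕜 f := by
  intro w
  contrapose
  rw [spectrum.notMem_iff, spectrum.notMem_iff]
  intro hw
  convert isUnit_restrict_ker hw ((Algebra.commute_algebraMap_left w D).sub_left h) using 1
  ext
  simp [Algebra.algebraMap_eq_smul_one]

theorem mem_spectrum_smul_add_smul_of_mem_spectrum_restrict {N M : E →L[𝕜] E}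
    (hNM : Commute N M) {μ w : 𝕜} (hN : ∀ x ∈ (M - μ • 1).ker, N x ∈ (M - μ • 1).ker)
    (hw : w ∈ spectrum 𝕜 (N.restrict hN)) {a : 𝕜} (ha : a ≠ 0) (b : 𝕜) :
    a * w + b * μ ∈ spectrum 𝕜 (a • N + b • M) := by
  have hcomm : Commute (a • N + b • M) (M - μ • 1) :=
    ((hNM.smul_left a).add_left ((Commute.refl M).smul_left b)).sub_right
      ((Commute.one_right _).smul_right μ)
  refine spectrum_restrict_ker_subset hcomm ?_
  have hrestrict : (a • N + b • M).restrict (apply_mem_ker_of_commute hcomm) =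
      a • N.restrict hN + algebraMap 𝕜 _ (b * μ) := by
    refine ContinuousLinearMap.ext fun x => Subtype.ext ?_
    have hMx : M x = μ • (x : E) := by simpa [sub_eq_zero] using x.2
    simp only [coe_restrict_apply, add_apply, smul_apply, Submodule.coe_add, Submodule.coe_smul,
      algebraMap_apply, hMx, mul_smul]
  rw [hrestrict, ← spectrum.add_singleton_eq]
  have hsmul := spectrum.unit_smul_eq_smul (N.restrict hN) (Units.mk0 a ha)
  rw [Units.smul_mk0] at hsmul
  exact Set.add_mem_add (hsmul ▸ Set.smul_mem_smul_set hw) rfl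

theorem antilipschitz_pow {T : E →L[𝕜] E} {K : ℝ≥0} (hT : AntilipschitzWith K T) (n : ℕ) :
    AntilipschitzWith (K ^ n) ⇑(T ^ n) := by
  induction n with
  | zero => simpa using AntilipschitzWith.id
  | succ n ih =>
    rw [pow_succ' T, pow_succ K]
    exact hT.comp ih

end NormedField

section Complex

variable {E : Type*} [NormedAddCommGroup E] [NormedSpace ℂ E] [CompleteSpace E]

theorem exists_ne_zero_mem_spectrum_of_antilipschitz [Nontrivial E] {T : E →L[ℂ] E} {K : ℝ≥0}
    (hT : AntilipschitzWith K T) : ∃ w ∈ spectrum ℂ T, w ≠ 0 := by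
  have hK : K ≠ 0 := by
    rintro rfl
    exact not_subsingleton E hT.subsingleton
  obtain ⟨x, hx⟩ := exists_ne (0 : E)
  have hpow (n : ℕ) : (K ^ n)⁻¹ ≤ ‖T ^ n‖₊ := by
    rw [NNReal.inv_le (pow_ne_zero n hK), ← NNReal.coe_le_coe, NNReal.coe_mul, NNReal.coe_pow,
      coe_nnnorm, NNReal.coe_one, ← mul_le_mul_iff_left₀ (norm_pos_iff.2 hx), one_mul]
    calc ‖x‖ ≤ K ^ n * ‖(T ^ n) x‖ := by
          exact_mod_cast (T ^ n).bound_of_antilipschitz (antilipschitz_pow hT n) x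
      _ ≤ K ^ n * (‖T ^ n‖ * ‖x‖) := by gcongr; exact le_opNorm _ _
      _ = _ := by ring
  have hρ : ((K⁻¹ : ℝ≥0) : ℝ≥0∞) ≤ spectralRadius ℂ T := by
    refine ge_of_tendsto (spectrum.pow_nnnorm_pow_one_div_tendsto_nhds_spectralRadius T)
      (eventually_atTop.2 ⟨1, fun n hn => ?_⟩)
    have hn0 : n ≠ 0 := by omega
    rw [one_div, ← ENNReal.pow_rpow_inv_natCast hn0 ((K⁻¹ : ℝ≥0) : ℝ≥0∞)]
    gcongr
    exact_mod_cast (inv_pow K n).symm ▸ hpow n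
  obtain ⟨w, hw, hwρ⟩ := spectrum.exists_nnnorm_eq_spectralRadius T
  refine ⟨w, hw, fun hw0 => ?_⟩
  rw [← hwρ, hw0, nnnorm_zero, ENNReal.coe_le_coe, nonpos_iff_eq_zero, inv_eq_zero] at hρ
  exact hK hρ

theorem not_antilipschitz_sub_of_ker_sub_conj_ne_bot {N M : E →L[ℂ] E} (hNM : Commute N M)
    (hRe : ∀ w ∈ spectrum ℂ ((2 : ℂ)⁻¹ • (N + M)), w.im = 0)
    (hIm : ∀ w ∈ spectrum ℂ (((2 : ℂ) * Complex.I)⁻¹ • (N - M)), w.im = 0)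
    {z : ℂ} (hz : (M - conj z • 1).ker ≠ ⊥) (K : ℝ≥0) : ¬AntilipschitzWith K ⇑(N - z • 1) := by
  intro hK
  have hN := apply_mem_ker_of_commute (hNM.sub_right ((Commute.one_right N).smul_right (conj z)))
  have : Nontrivial (M - conj z • 1).ker := Submodule.nontrivial_iff_ne_bot.2 hz
  have : CompleteSpace (M - conj z • 1).ker := (isClosed_ker _).completeSpace_coe
  have hspec : ∀ w ∈ spectrum ℂ (N.restrict hN), w = z := fun w hw =>
    Complex.eq_of_im_half_add_conj_eq_zero
      (hRe _ (by
        rw [smul_add]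
        exact mem_spectrum_smul_add_smul_of_mem_spectrum_restrict hNM hN hw (by norm_num) _))
      (hIm _ (by
        rw [smul_sub, sub_eq_add_neg, ← neg_smul]
        exact mem_spectrum_smul_add_smul_of_mem_spectrum_restrict hNM hN hw (by simp) _))
  have hKV : AntilipschitzWith K ⇑(N.restrict hN - algebraMap ℂ _ z) := fun x y => hK x y
  obtain ⟨w, hw, hw0⟩ := exists_ne_zero_mem_spectrum_of_antilipschitz hKV
  rw [← spectrum.sub_singleton_eq] at hw
  obtain ⟨w', hw', _, rfl, rfl⟩ := hw
  exact hw0 (sub_eq_zero.2 (hspec w' hw'))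

end Complex

end ContinuousLinearMap

theorem stmt10_general {H : Type*} [NormedAddCommGroup H] [InnerProductSpace ℂ H] [CompleteSpace H]
    (J N : H →L[ℂ] H) (hJ2 : J * J = 1)
    (hNnormal : N * (J * adjoint N * J) = (J * adjoint N * J) * N)
    (hRe : ∀ z ∈ spectrum ℂ ((2 : ℂ)⁻¹ • (N + J * adjoint N * J)), z.im = 0)
    (hIm : ∀ z ∈ spectrum ℂ (((2 : ℂ) * Complex.I)⁻¹ • (N - J * adjoint N * J)), z.im = 0) :
    spectrum ℂ N = {z : ℂ | ∃ x : ℕ → H, (∀ n, ‖x n‖ = 1) ∧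
      Tendsto (fun n => ‖(N - z • 1) (x n)‖) atTop (𝓝 0)} := by
  show spectrum ℂ N = N.approxPointSpectrum
  refine Set.Subset.antisymm (fun z hz => ?_) (approxPointSpectrum_subset_spectrum N)
  by_contra hzap
  obtain ⟨K, hK⟩ := notMem_approxPointSpectrum_iff.1 hzap
  obtain ⟨u, hu0, hu⟩ := exists_ne_zero_adjoint_apply_eq_of_antilipschitz hz hK
  have hJJ (x : H) : J (J x) = x := by simpa using DFunLike.congr_fun hJ2 x
  have hker : (J * adjoint N * J - conj z • 1).ker ≠ ⊥ := by
    refine (Submodule.ne_bot_iff _).2 ⟨J u, ?_, fun h => hu0 ?_⟩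
    · simp [hJJ, hu]
    · simpa [hJJ] using congrArg J h
  exact not_antilipschitz_sub_of_ker_sub_conj_ne_bot hNnormal hRe hIm hker K hK

/-- Let `N` be a bounded normal operator in a Krein space (a Hilbert space
`H` with fundamental symmetry `J`; the Krein adjoint is `N⁺ = J N* J`). If the real part
`(N+N⁺)/2` and the imaginary part `(N−N⁺)/(2i)` have real spectra, then `σ(N) = σ_ap(N)`:
every spectral point of `N` is an approximate eigenvalue. -/
theorem stmt10 {H : Type*} [NormedAddCommGroup H] [InnerProductSpace ℂ H] [CompleteSpace H]
    (J N : H →L[ℂ] H) (hJsa : IsSelfAdjoint J) (hJ2 : J * J = 1)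
    (hNnormal : N * (J * adjoint N * J) = (J * adjoint N * J) * N)
    (hRe : ∀ z ∈ spectrum ℂ ((2 : ℂ)⁻¹ • (N + J * adjoint N * J)), z.im = 0)
    (hIm : ∀ z ∈ spectrum ℂ (((2 : ℂ) * Complex.I)⁻¹ • (N - J * adjoint N * J)), z.im = 0) :
    spectrum ℂ N = {z : ℂ | ∃ x : ℕ → H, (∀ n, ‖x n‖ = 1) ∧
      Tendsto (fun n => ‖(N - z • 1) (x n)‖) atTop (𝓝 0)} :=
  stmt10_general J N hJ2 hNnormal hRe hIm
end

section
/- Let H be a Hilbert space, C bounded normal, A bounded selfadjoint commuting with C, and suppose A² − 4I ≥ 0. Let W := (A² − 4I)^{1/2}. Then Z₁ := ½(W − A)C and Z₂ := −½(W + A)C are both solutions of Z² + ACZ + C² = 0, they commute, and the pencil factorizes: λ² + λAC + C² = (λ − Z₁)(λ − Z₂) for all λ ∈ ℂ. -/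
/-!
With `W² = A² − 4` and `W`, `A`, `C` pairwise commuting, `Z₁ + Z₂ = −AC` and
`Z₁ Z₂ = Z₂ Z₁ = −¼ (W² − A²) C² = C²`. For two commuting elements of a ring, Vieta's
formulas alone make each of them a root of `Z² + bZ + c` with `b = −(Z₁ + Z₂)`, `c = Z₁ Z₂`,
and expanding `(λ − Z₁)(λ − Z₂)` gives the factorization of the pencil.
-/

open ContinuousLinearMap
open scoped InnerProductSpace

section Vieta

variable {K R : Type*} [CommRing K] [Ring R] [Algebra K R]

theorem Commute.sq_add_mul_add_eq_zero_of_add_eq_neg_of_mul_eq {z₁ z₂ b c : R}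
    (hcomm : Commute z₁ z₂) (hsum : z₁ + z₂ = -b) (hprod : z₁ * z₂ = c) :
    z₁ ^ 2 + b * z₁ + c = 0 := by
  obtain rfl : b = -(z₁ + z₂) := by rw [hsum, neg_neg]
  subst hprod
  rw [hcomm.eq]
  noncomm_ring

theorem smul_one_sub_mul_smul_one_sub (k : K) (a b : R) :
    (k • 1 - a) * (k • 1 - b) = k ^ 2 • 1 - k • (a + b) + a * b := by
  simp only [mul_sub, sub_mul, smul_mul_assoc, mul_smul_comm, one_mul, mul_one]
  module

theorem smul_one_sq_add_smul_add_eq_of_add_eq_neg_of_mul_eq {z₁ z₂ b c : R}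
    (hsum : z₁ + z₂ = -b) (hprod : z₁ * z₂ = c) (k : K) :
    k ^ 2 • 1 + k • b + c = (k • 1 - z₁) * (k • 1 - z₂) := by
  rw [smul_one_sub_mul_smul_one_sub, hsum, hprod, smul_neg, sub_neg_eq_add]

end Vieta

section QuadraticRoots

variable {K R : Type*} [Field K] [Ring R] [Algebra K R]

theorem half_sub_mul_add_neg_half_add_mul [NeZero (2 : K)] (a c w : R) :
    (2 : K)⁻¹ • ((w - a) * c) + -((2 : K)⁻¹ • ((w + a) * c)) = -(a * c) := by
  rw [← sub_eq_add_neg, ← smul_sub, ← sub_mul, show w - a - (w + a) = (2 : K) • -a by module,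
    smul_mul_assoc, inv_smul_smul₀ two_ne_zero, neg_mul]

variable {a c w : R}

theorem commute_half_sub_mul_neg_half_add_mul (hwa : Commute w a) (hwc : Commute w c)
    (hac : Commute a c) :
    Commute ((2 : K)⁻¹ • ((w - a) * c)) (-((2 : K)⁻¹ • ((w + a) * c))) := by
  have hsub_add : Commute (w - a) (w + a) :=
    ((Commute.refl w).add_right hwa).sub_left (hwa.symm.add_right (Commute.refl a))
  have hc_add : Commute c (w + a) := hwc.symm.add_right hac.symm
  have hsub_c : Commute (w - a) c := hwc.sub_left hac
  exact (((hsub_add.mul_left hc_add).mul_right (hsub_c.mul_left (Commute.refl c))).smul_left _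
    |>.smul_right _).neg_right

theorem half_sub_mul_mul_neg_half_add_mul [NeZero (2 : K)] (hwa : Commute w a)
    (hwc : Commute w c) (hac : Commute a c) (hw : w * w = a * a - 4) :
    (2 : K)⁻¹ • ((w - a) * c) * -((2 : K)⁻¹ • ((w + a) * c)) = c ^ 2 := by
  have hdiff : (w - a) * (w + a) = -4 := by
    rw [← hwa.mul_self_sub_mul_self_eq', hw, sub_sub_cancel_left]
  rw [mul_neg, smul_mul_smul_comm, (hwc.symm.add_right hac.symm).mul_mul_mul_comm, hdiff]
  have h4 : (-4 : R) * (c * c) = (-4 : K) • c ^ 2 := by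
    rw [Algebra.smul_def, map_neg, map_ofNat, sq]
  have hK : -((2 : K)⁻¹ * 2⁻¹ * -4) = 1 := by
    field_simp
    norm_num
  rw [h4, smul_smul, ← neg_smul, hK, one_smul]

end QuadraticRoots

theorem stmt17_general {H : Type*} [NormedAddCommGroup H] [InnerProductSpace ℂ H]
    (C A W : H →L[ℂ] H) (hAC : A * C = C * A)
    (hW2 : W * W = A * A - 4) (hWA : W * A = A * W) (hWC : W * C = C * W) :
    ((2 : ℂ)⁻¹ • ((W - A) * C)) ^ 2 + A * C * ((2 : ℂ)⁻¹ • ((W - A) * C)) + C ^ 2 = 0 ∧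
    (-((2 : ℂ)⁻¹ • ((W + A) * C))) ^ 2 + A * C * (-((2 : ℂ)⁻¹ • ((W + A) * C))) + C ^ 2 = 0 ∧
    ((2 : ℂ)⁻¹ • ((W - A) * C)) * (-((2 : ℂ)⁻¹ • ((W + A) * C))) =
      (-((2 : ℂ)⁻¹ • ((W + A) * C))) * ((2 : ℂ)⁻¹ • ((W - A) * C)) ∧
    ∀ z : ℂ, z ^ 2 • (1 : H →L[ℂ] H) + z • (A * C) + C ^ 2 =
      (z • (1 : H →L[ℂ] H) - (2 : ℂ)⁻¹ • ((W - A) * C)) *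
        (z • (1 : H →L[ℂ] H) - (-((2 : ℂ)⁻¹ • ((W + A) * C)))) := by
  have hsum := half_sub_mul_add_neg_half_add_mul (K := ℂ) A C W
  have hcomm := commute_half_sub_mul_neg_half_add_mul (K := ℂ) hWA hWC hAC
  have hprod := half_sub_mul_mul_neg_half_add_mul (K := ℂ) hWA hWC hAC hW2
  refine ⟨hcomm.sq_add_mul_add_eq_zero_of_add_eq_neg_of_mul_eq hsum hprod, ?_, hcomm.eq,
    smul_one_sq_add_smul_add_eq_of_add_eq_neg_of_mul_eq hsum hprod⟩
  exact hcomm.symm.sq_add_mul_add_eq_zero_of_add_eq_neg_of_mul_eq (by rwa [add_comm])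
    (by rwa [← hcomm.eq])

/-- Let `C` be bounded normal and `A` bounded selfadjoint with `AC = CA` on
a Hilbert space `H`, and assume `A² − 4I ≥ 0`. Let `W` be the positive square root of
`A² − 4I` (a positive selfadjoint operator with `W² = A² − 4`, commuting with `A` and
`C`). Then `Z₁ = ½(W − A)C` and `Z₂ = −½(W + A)C` solve `Z² + ACZ + C² = 0`, they
commute, and `λ² + λAC + C² = (λ − Z₁)(λ − Z₂)` for all `λ ∈ ℂ`. -/
theorem stmt17 {H : Type*} [NormedAddCommGroup H] [InnerProductSpace ℂ H] [CompleteSpace H]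
    (C A W : H →L[ℂ] H) (hC : C * adjoint C = adjoint C * C)
    (hA : IsSelfAdjoint A) (hAC : A * C = C * A)
    (hposA : ∀ x : H, 4 * ‖x‖ ^ 2 ≤ (⟪(A * A) x, x⟫_ℂ).re)
    (hWsa : IsSelfAdjoint W) (hWpos : ∀ x : H, 0 ≤ (⟪W x, x⟫_ℂ).re)
    (hW2 : W * W = A * A - 4) (hWA : W * A = A * W) (hWC : W * C = C * W) :
    ((2 : ℂ)⁻¹ • ((W - A) * C)) ^ 2 + A * C * ((2 : ℂ)⁻¹ • ((W - A) * C)) + C ^ 2 = 0 ∧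
    (-((2 : ℂ)⁻¹ • ((W + A) * C))) ^ 2 + A * C * (-((2 : ℂ)⁻¹ • ((W + A) * C))) + C ^ 2 = 0 ∧
    ((2 : ℂ)⁻¹ • ((W - A) * C)) * (-((2 : ℂ)⁻¹ • ((W + A) * C))) =
      (-((2 : ℂ)⁻¹ • ((W + A) * C))) * ((2 : ℂ)⁻¹ • ((W - A) * C)) ∧
    ∀ z : ℂ, z ^ 2 • (1 : H →L[ℂ] H) + z • (A * C) + C ^ 2 =
      (z • (1 : H →L[ℂ] H) - (2 : ℂ)⁻¹ • ((W - A) * C)) *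
        (z • (1 : H →L[ℂ] H) - (-((2 : ℂ)⁻¹ • ((W + A) * C)))) :=
  stmt17_general C A W hAC hW2 hWA hWC
end

section
/- Let D and A be bounded selfadjoint operators on a Hilbert space H such that (ADx,x)² ≥ 4(D²x,x) for all unit vectors x, and suppose 0 is not an eigenvalue of D. Then A² − 4I ≥ 0. -/
open scoped InnerProductSpace
open RCLike ContinuousLinearMap

theorem mul_norm_le_norm_apply_of_forall_norm_eq_one {𝕜 E F 𝓕 : Type*} [RCLike 𝕜]
    [NormedAddCommGroup E] [NormedSpace 𝕜 E] [NormedAddCommGroup F] [NormedSpace 𝕜 F]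
    [FunLike 𝓕 E F] [LinearMapClass 𝓕 𝕜 E F] (f : 𝓕) {c : ℝ}
    (h : ∀ x : E, ‖x‖ = 1 → c ≤ ‖f x‖) (x : E) : c * ‖x‖ ≤ ‖f x‖ := by
  rcases eq_or_ne x 0 with rfl | hx
  · simp
  have hx' : 0 < ‖x‖ := norm_pos_iff.mpr hx
  have hunit := h _ (norm_smul_inv_norm (𝕜 := 𝕜) hx)
  rw [map_smul, norm_smul, norm_inv, norm_algebraMap', norm_norm, inv_mul_eq_div,
    le_div_iff₀ hx'] at hunit
  exact hunit

section SelfAdjoint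

variable {𝕜 E : Type*} [RCLike 𝕜] [NormedAddCommGroup E] [InnerProductSpace 𝕜 E] [CompleteSpace E]

theorem IsSelfAdjoint.re_inner_mul_self_apply {T : E →L[𝕜] E} (hT : IsSelfAdjoint T) (x : E) :
    re ⟪(T * T) x, x⟫_𝕜 = ‖T x‖ ^ 2 := by
  rw [apply_norm_sq_eq_inner_adjoint_left, hT.adjoint_eq, mul_def]

theorem IsSelfAdjoint.re_inner_mul_apply_sq_le {A : E →L[𝕜] E} (hA : IsSelfAdjoint A)
    (D : E →L[𝕜] E) (x : E) : (re ⟪(A * D) x, x⟫_𝕜) ^ 2 ≤ ‖D x‖ ^ 2 * ‖A x‖ ^ 2 := by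
  have hsymm : ⟪(A * D) x, x⟫_𝕜 = ⟪D x, A x⟫_𝕜 := hA.isSymmetric (D x) x
  rw [hsymm, ← mul_pow, ← sq_abs]
  exact pow_le_pow_left₀ (abs_nonneg _)
    ((abs_re_le_norm _).trans (norm_inner_le_norm _ _)) 2

/-- Cauchy–Schwarz gives `(ADx,x)² ≤ ‖Dx‖²‖Ax‖²`, and `(D²x,x) = ‖Dx‖²` can be cancelled. -/
theorem IsSelfAdjoint.two_le_norm_apply_of_four_mul_re_inner_le {A D : E →L[𝕜] E}
    (hA : IsSelfAdjoint A) (hD : IsSelfAdjoint D) {x : E} (hDx : D x ≠ 0)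
    (h : 4 * re ⟪(D * D) x, x⟫_𝕜 ≤ (re ⟪(A * D) x, x⟫_𝕜) ^ 2) : 2 ≤ ‖A x‖ := by
  rw [hD.re_inner_mul_self_apply] at h
  have hDx' : 0 < ‖D x‖ ^ 2 := by positivity
  have h4 : 4 ≤ ‖A x‖ ^ 2 :=
    le_of_mul_le_mul_left (by linarith [hA.re_inner_mul_apply_sq_le D x]) hDx'
  nlinarith [norm_nonneg (A x)]

end SelfAdjoint

/-- Let `D`, `A` be bounded selfadjoint operators on a Hilbert space with
`(ADx,x)² ≥ 4(D²x,x)` for all unit vectors `x`, and suppose `0` is not an eigenvalue of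
`D`. Then `A² − 4I ≥ 0`. -/
theorem stmt18 {H : Type*} [NormedAddCommGroup H] [InnerProductSpace ℂ H] [CompleteSpace H]
    (D A : H →L[ℂ] H) (hD : IsSelfAdjoint D) (hA : IsSelfAdjoint A)
    (hhyp : ∀ x : H, ‖x‖ = 1 → 4 * (⟪(D * D) x, x⟫_ℂ).re ≤ ((⟪(A * D) x, x⟫_ℂ).re) ^ 2)
    (hDinj : ∀ x : H, D x = 0 → x = 0) :
    ∀ x : H, 4 * ‖x‖ ^ 2 ≤ (⟪(A * A) x, x⟫_ℂ).re := by
  have hunit : ∀ y : H, ‖y‖ = 1 → 2 ≤ ‖A y‖ := fun y hy =>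
    hA.two_le_norm_apply_of_four_mul_re_inner_le hD
      (fun hDy => by simp [hDinj y hDy] at hy) (hhyp y hy)
  intro x
  rw [← RCLike.re_to_complex, hA.re_inner_mul_self_apply]
  calc 4 * ‖x‖ ^ 2 = (2 * ‖x‖) ^ 2 := by ring
    _ ≤ ‖A x‖ ^ 2 := pow_le_pow_left₀ (by positivity)
        (mul_norm_le_norm_apply_of_forall_norm_eq_one A hunit x) 2
end
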